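/- arXiv:2104.14697 — 2 statements merged into one kernel-verified Lean document; each statement's English description precedes it below -/
import Mathlib

section
/- For every SCI-formula φ, if φ has a TC_SCI-tableau proof (a closed TC_SCI-tableau with w⁻ : φ at the root), then φ has a TC_SCI+(UB)-tableau proof, i.e., a closed tableau in the system obtained from TC_SCI by additionally requiring that a decomposition rule may be applied to a labelled formula w : ψ on a branch only if w : ψ is the ψ-urfather on that branch. -/
/-- SCI-formulas: atoms, negation, implication, and the identity connective. -/
inductive SCIForm : Type
  | atom : ℕ → SCIForm
  | not : SCIForm → SCIForm
  | imp : SCIForm → SCIForm → SCIForm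
  | idn : SCIForm → SCIForm → SCIForm
  deriving DecidableEq

/-- An SCI-structure over a carrier type `U`: a set of designated values and
operations interpreting ¬, →, ≡. -/
structure SCIStruct (U : Type) where
  D : Set U
  neg : U → U
  imp : U → U → U
  idn : U → U → U

/-- `M` is an SCI-model: `U` is non-empty, `D` is a proper subset of `U`, and the
three semantic conditions hold. -/
def IsSCIModel {U : Type} (M : SCIStruct U) : Prop :=
  Nonempty U ∧ M.D ≠ Set.univ ∧
  (∀ a : U, M.neg a ∈ M.D ↔ a ∉ M.D) ∧
  (∀ a b : U, M.imp a b ∈ M.D ↔ (a ∉ M.D ∨ b ∈ M.D)) ∧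
  (∀ a b : U, M.idn a b ∈ M.D ↔ a = b)

/-- A valuation in an SCI-structure: a homomorphism from formulas to `U`. -/
def IsValuation {U : Type} (M : SCIStruct U) (V : SCIForm → U) : Prop :=
  (∀ φ, V (SCIForm.not φ) = M.neg (V φ)) ∧
  (∀ φ ψ, V (SCIForm.imp φ ψ) = M.imp (V φ) (V ψ)) ∧
  (∀ φ ψ, V (SCIForm.idn φ ψ) = M.idn (V φ) (V ψ))

/-- A formula is SCI-satisfiable if its denotation is designated in some
SCI-model under some valuation. -/
def SCISatisfiable (φ : SCIForm) : Prop :=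
  ∃ (U : Type) (M : SCIStruct U) (V : SCIForm → U),
    IsSCIModel M ∧ IsValuation M V ∧ V φ ∈ M.D

/-- A formula is SCI-valid if its denotation is designated in every SCI-model
under every valuation. -/
def SCIValid (φ : SCIForm) : Prop :=
  ∀ (U : Type) (M : SCIStruct U) (V : SCIForm → U),
    IsSCIModel M → IsValuation M V → V φ ∈ M.D

/-- Labels: a Boolean polarity (`true` = the set L⁺, `false` = the set L⁻)
together with a natural number index; L⁺ and L⁻ are disjoint and countably
infinite. -/
abbrev Label : Type := Bool × ℕ

/-- `w` belongs to L⁺. -/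
def posL (w : Label) : Prop := w.1 = true

/-- `w` belongs to L⁻. -/
def negL (w : Label) : Prop := w.1 = false

/-- Expressions occurring on tableau branches: labelled formulas `w : φ`,
equalities `w = v`, inequalities `w ≠ v`, and the closure symbol ⊥. -/
inductive Node : Type
  | lf : Label → SCIForm → Node
  | eq : Label → Label → Node
  | neq : Label → Label → Node
  | bot : Node
  deriving DecidableEq

/-- `|φ|`: the number of occurrences of subformulas of `φ`. -/
def SCIForm.size : SCIForm → ℕ
  | SCIForm.atom _ => 1
  | SCIForm.not φ => SCIForm.size φ + 1
  | SCIForm.imp φ ψ => SCIForm.size φ + SCIForm.size ψ + 1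
  | SCIForm.idn φ ψ => SCIForm.size φ + SCIForm.size ψ + 1

/-- A label is fresh on a branch: no labelled formula on the branch carries it. -/
def freshL (v : Label) (l : List Node) : Prop := ∀ φ, Node.lf v φ ∉ l

/-- One application of a TC_SCI rule extending a single branch.  A branch is a
list of nodes (in order of introduction, root first) together with the set `E`
of labelled formulas to which a decomposition rule has already been applied
(each decomposition rule may be applied only once to a given labelled formula,
each equality rule only if its conclusion is not yet on the branch, and no rule
is applied to a closed branch). -/
inductive Extend : List Node → Set (Label × SCIForm) → List Node → Set (Label × SCIForm) → Prop
  | negP (l : List Node) (E : Set (Label × SCIForm)) (w v : Label) (φ : SCIForm) :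
      Node.bot ∉ l → posL w → Node.lf w (SCIForm.not φ) ∈ l → (w, SCIForm.not φ) ∉ E →
      negL v → freshL v l →
      Extend l E (l ++ [Node.lf v φ]) (insert (w, SCIForm.not φ) E)
  | negN (l : List Node) (E : Set (Label × SCIForm)) (w v : Label) (φ : SCIForm) :
      Node.bot ∉ l → negL w → Node.lf w (SCIForm.not φ) ∈ l → (w, SCIForm.not φ) ∉ E →
      posL v → freshL v l →
      Extend l E (l ++ [Node.lf v φ]) (insert (w, SCIForm.not φ) E)
  | impP1 (l : List Node) (E : Set (Label × SCIForm)) (w v u : Label) (φ ψ : SCIForm) :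
      Node.bot ∉ l → posL w → Node.lf w (SCIForm.imp φ ψ) ∈ l → (w, SCIForm.imp φ ψ) ∉ E →
      negL v → negL u → v ≠ u → freshL v l → freshL u l →
      Extend l E (l ++ [Node.lf v φ, Node.lf u ψ]) (insert (w, SCIForm.imp φ ψ) E)
  | impP2 (l : List Node) (E : Set (Label × SCIForm)) (w v u : Label) (φ ψ : SCIForm) :
      Node.bot ∉ l → posL w → Node.lf w (SCIForm.imp φ ψ) ∈ l → (w, SCIForm.imp φ ψ) ∉ E →
      negL v → posL u → v ≠ u → freshL v l → freshL u l →
      Extend l E (l ++ [Node.lf v φ, Node.lf u ψ]) (insert (w, SCIForm.imp φ ψ) E)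
  | impP3 (l : List Node) (E : Set (Label × SCIForm)) (w v u : Label) (φ ψ : SCIForm) :
      Node.bot ∉ l → posL w → Node.lf w (SCIForm.imp φ ψ) ∈ l → (w, SCIForm.imp φ ψ) ∉ E →
      posL v → posL u → v ≠ u → freshL v l → freshL u l →
      Extend l E (l ++ [Node.lf v φ, Node.lf u ψ]) (insert (w, SCIForm.imp φ ψ) E)
  | impN (l : List Node) (E : Set (Label × SCIForm)) (w v u : Label) (φ ψ : SCIForm) :
      Node.bot ∉ l → negL w → Node.lf w (SCIForm.imp φ ψ) ∈ l → (w, SCIForm.imp φ ψ) ∉ E →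
      posL v → negL u → v ≠ u → freshL v l → freshL u l →
      Extend l E (l ++ [Node.lf v φ, Node.lf u ψ]) (insert (w, SCIForm.imp φ ψ) E)
  | idnP1 (l : List Node) (E : Set (Label × SCIForm)) (w v u : Label) (φ ψ : SCIForm) :
      Node.bot ∉ l → posL w → Node.lf w (SCIForm.idn φ ψ) ∈ l → (w, SCIForm.idn φ ψ) ∉ E →
      posL v → posL u → v ≠ u → freshL v l → freshL u l →
      Extend l E (l ++ [Node.lf v φ, Node.lf u ψ, Node.eq v u]) (insert (w, SCIForm.idn φ ψ) E)
  | idnP2 (l : List Node) (E : Set (Label × SCIForm)) (w v u : Label) (φ ψ : SCIForm) :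
      Node.bot ∉ l → posL w → Node.lf w (SCIForm.idn φ ψ) ∈ l → (w, SCIForm.idn φ ψ) ∉ E →
      negL v → negL u → v ≠ u → freshL v l → freshL u l →
      Extend l E (l ++ [Node.lf v φ, Node.lf u ψ, Node.eq v u]) (insert (w, SCIForm.idn φ ψ) E)
  | idnN1 (l : List Node) (E : Set (Label × SCIForm)) (w v u : Label) (φ ψ : SCIForm) :
      Node.bot ∉ l → negL w → Node.lf w (SCIForm.idn φ ψ) ∈ l → (w, SCIForm.idn φ ψ) ∉ E →
      posL v → posL u → v ≠ u → freshL v l → freshL u l →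
      Extend l E (l ++ [Node.lf v φ, Node.lf u ψ, Node.neq v u]) (insert (w, SCIForm.idn φ ψ) E)
  | idnN2 (l : List Node) (E : Set (Label × SCIForm)) (w v u : Label) (φ ψ : SCIForm) :
      Node.bot ∉ l → negL w → Node.lf w (SCIForm.idn φ ψ) ∈ l → (w, SCIForm.idn φ ψ) ∉ E →
      posL v → negL u → v ≠ u → freshL v l → freshL u l →
      Extend l E (l ++ [Node.lf v φ, Node.lf u ψ]) (insert (w, SCIForm.idn φ ψ) E)
  | idnN3 (l : List Node) (E : Set (Label × SCIForm)) (w v u : Label) (φ ψ : SCIForm) :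
      Node.bot ∉ l → negL w → Node.lf w (SCIForm.idn φ ψ) ∈ l → (w, SCIForm.idn φ ψ) ∉ E →
      negL v → posL u → v ≠ u → freshL v l → freshL u l →
      Extend l E (l ++ [Node.lf v φ, Node.lf u ψ]) (insert (w, SCIForm.idn φ ψ) E)
  | idnN4 (l : List Node) (E : Set (Label × SCIForm)) (w v u : Label) (φ ψ : SCIForm) :
      Node.bot ∉ l → negL w → Node.lf w (SCIForm.idn φ ψ) ∈ l → (w, SCIForm.idn φ ψ) ∉ E →
      negL v → negL u → v ≠ u → freshL v l → freshL u l →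
      Extend l E (l ++ [Node.lf v φ, Node.lf u ψ, Node.neq v u]) (insert (w, SCIForm.idn φ ψ) E)
  | eqNeg (l : List Node) (E : Set (Label × SCIForm)) (w v u y : Label) (φ ψ : SCIForm) :
      Node.bot ∉ l → Node.lf w φ ∈ l → Node.lf v ψ ∈ l → Node.eq w v ∈ l →
      Node.lf u (SCIForm.not φ) ∈ l → Node.lf y (SCIForm.not ψ) ∈ l →
      Node.eq u y ∉ l →
      Extend l E (l ++ [Node.eq u y]) E
  | eqImp (l : List Node) (E : Set (Label × SCIForm)) (w v w' v' x z : Label) (φ ψ χ θ : SCIForm) :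
      Node.bot ∉ l → Node.lf w φ ∈ l → Node.lf v ψ ∈ l → Node.eq w v ∈ l →
      Node.lf w' χ ∈ l → Node.lf v' θ ∈ l → Node.eq w' v' ∈ l →
      Node.lf x (SCIForm.imp φ χ) ∈ l → Node.lf z (SCIForm.imp ψ θ) ∈ l →
      Node.eq x z ∉ l →
      Extend l E (l ++ [Node.eq x z]) E
  | eqIdn (l : List Node) (E : Set (Label × SCIForm)) (w v w' v' x z : Label) (φ ψ χ θ : SCIForm) :
      Node.bot ∉ l → Node.lf w φ ∈ l → Node.lf v ψ ∈ l → Node.eq w v ∈ l →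
      Node.lf w' χ ∈ l → Node.lf v' θ ∈ l → Node.eq w' v' ∈ l →
      Node.lf x (SCIForm.idn φ χ) ∈ l → Node.lf z (SCIForm.idn ψ θ) ∈ l →
      Node.eq x z ∉ l →
      Extend l E (l ++ [Node.eq x z]) E
  | ruleF (l : List Node) (E : Set (Label × SCIForm)) (w v : Label) (φ : SCIForm) :
      Node.bot ∉ l → Node.lf w φ ∈ l → Node.lf v φ ∈ l → Node.eq w v ∉ l →
      Extend l E (l ++ [Node.eq w v]) E
  | ruleSym (l : List Node) (E : Set (Label × SCIForm)) (w v : Label) :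
      Node.bot ∉ l → Node.eq w v ∈ l → Node.eq v w ∉ l →
      Extend l E (l ++ [Node.eq v w]) E
  | ruleTran (l : List Node) (E : Set (Label × SCIForm)) (w v u : Label) :
      Node.bot ∉ l → Node.eq w v ∈ l → Node.eq v u ∈ l → Node.eq w u ∉ l →
      Extend l E (l ++ [Node.eq w u]) E
  | bot1 (l : List Node) (E : Set (Label × SCIForm)) (w v : Label) :
      Node.bot ∉ l → Node.eq w v ∈ l → Node.neq w v ∈ l →
      Extend l E (l ++ [Node.bot]) E
  | bot2 (l : List Node) (E : Set (Label × SCIForm)) (w v : Label) :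
      Node.bot ∉ l → posL w → negL v → Node.eq w v ∈ l →
      Extend l E (l ++ [Node.bot]) E

/-- `ClosedTab l E` holds iff there is a closed TC_SCI-tableau all of whose
branches extend the branch `l` (with `E` the set of labelled formulas already
decomposed on `l`): either a closure rule applies to `l`, or some rule of
TC_SCI can be applied so that all resulting branches carry closed tableaux. -/
inductive ClosedTab : List Node → Set (Label × SCIForm) → Prop
  | clos1 (l : List Node) (E : Set (Label × SCIForm)) (w v : Label) :
      Node.eq w v ∈ l → Node.neq w v ∈ l → ClosedTab l E
  | clos2 (l : List Node) (E : Set (Label × SCIForm)) (w v : Label) :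
      posL w → negL v → Node.eq w v ∈ l → ClosedTab l E
  | negP (l : List Node) (E : Set (Label × SCIForm)) (w v : Label) (φ : SCIForm) :
      posL w → Node.lf w (SCIForm.not φ) ∈ l → (w, SCIForm.not φ) ∉ E →
      negL v → freshL v l →
      ClosedTab (l ++ [Node.lf v φ]) (insert (w, SCIForm.not φ) E) →
      ClosedTab l E
  | negN (l : List Node) (E : Set (Label × SCIForm)) (w v : Label) (φ : SCIForm) :
      negL w → Node.lf w (SCIForm.not φ) ∈ l → (w, SCIForm.not φ) ∉ E →
      posL v → freshL v l →
      ClosedTab (l ++ [Node.lf v φ]) (insert (w, SCIForm.not φ) E) →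
      ClosedTab l E
  | impP (l : List Node) (E : Set (Label × SCIForm)) (w : Label) (φ ψ : SCIForm)
      (v1 u1 v2 u2 v3 u3 : Label) :
      posL w → Node.lf w (SCIForm.imp φ ψ) ∈ l → (w, SCIForm.imp φ ψ) ∉ E →
      negL v1 → negL u1 → v1 ≠ u1 → freshL v1 l → freshL u1 l →
      negL v2 → posL u2 → v2 ≠ u2 → freshL v2 l → freshL u2 l →
      posL v3 → posL u3 → v3 ≠ u3 → freshL v3 l → freshL u3 l →
      ClosedTab (l ++ [Node.lf v1 φ, Node.lf u1 ψ]) (insert (w, SCIForm.imp φ ψ) E) →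
      ClosedTab (l ++ [Node.lf v2 φ, Node.lf u2 ψ]) (insert (w, SCIForm.imp φ ψ) E) →
      ClosedTab (l ++ [Node.lf v3 φ, Node.lf u3 ψ]) (insert (w, SCIForm.imp φ ψ) E) →
      ClosedTab l E
  | impN (l : List Node) (E : Set (Label × SCIForm)) (w v u : Label) (φ ψ : SCIForm) :
      negL w → Node.lf w (SCIForm.imp φ ψ) ∈ l → (w, SCIForm.imp φ ψ) ∉ E →
      posL v → negL u → v ≠ u → freshL v l → freshL u l →
      ClosedTab (l ++ [Node.lf v φ, Node.lf u ψ]) (insert (w, SCIForm.imp φ ψ) E) →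
      ClosedTab l E
  | idnP (l : List Node) (E : Set (Label × SCIForm)) (w : Label) (φ ψ : SCIForm)
      (v1 u1 v2 u2 : Label) :
      posL w → Node.lf w (SCIForm.idn φ ψ) ∈ l → (w, SCIForm.idn φ ψ) ∉ E →
      posL v1 → posL u1 → v1 ≠ u1 → freshL v1 l → freshL u1 l →
      negL v2 → negL u2 → v2 ≠ u2 → freshL v2 l → freshL u2 l →
      ClosedTab (l ++ [Node.lf v1 φ, Node.lf u1 ψ, Node.eq v1 u1]) (insert (w, SCIForm.idn φ ψ) E) →
      ClosedTab (l ++ [Node.lf v2 φ, Node.lf u2 ψ, Node.eq v2 u2]) (insert (w, SCIForm.idn φ ψ) E) →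
      ClosedTab l E
  | idnN (l : List Node) (E : Set (Label × SCIForm)) (w : Label) (φ ψ : SCIForm)
      (v1 u1 v2 u2 v3 u3 v4 u4 : Label) :
      negL w → Node.lf w (SCIForm.idn φ ψ) ∈ l → (w, SCIForm.idn φ ψ) ∉ E →
      posL v1 → posL u1 → v1 ≠ u1 → freshL v1 l → freshL u1 l →
      posL v2 → negL u2 → v2 ≠ u2 → freshL v2 l → freshL u2 l →
      negL v3 → posL u3 → v3 ≠ u3 → freshL v3 l → freshL u3 l →
      negL v4 → negL u4 → v4 ≠ u4 → freshL v4 l → freshL u4 l →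
      ClosedTab (l ++ [Node.lf v1 φ, Node.lf u1 ψ, Node.neq v1 u1]) (insert (w, SCIForm.idn φ ψ) E) →
      ClosedTab (l ++ [Node.lf v2 φ, Node.lf u2 ψ]) (insert (w, SCIForm.idn φ ψ) E) →
      ClosedTab (l ++ [Node.lf v3 φ, Node.lf u3 ψ]) (insert (w, SCIForm.idn φ ψ) E) →
      ClosedTab (l ++ [Node.lf v4 φ, Node.lf u4 ψ, Node.neq v4 u4]) (insert (w, SCIForm.idn φ ψ) E) →
      ClosedTab l E
  | eqNeg (l : List Node) (E : Set (Label × SCIForm)) (w v u y : Label) (φ ψ : SCIForm) :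
      Node.lf w φ ∈ l → Node.lf v ψ ∈ l → Node.eq w v ∈ l →
      Node.lf u (SCIForm.not φ) ∈ l → Node.lf y (SCIForm.not ψ) ∈ l →
      Node.eq u y ∉ l →
      ClosedTab (l ++ [Node.eq u y]) E → ClosedTab l E
  | eqImp (l : List Node) (E : Set (Label × SCIForm)) (w v w' v' x z : Label) (φ ψ χ θ : SCIForm) :
      Node.lf w φ ∈ l → Node.lf v ψ ∈ l → Node.eq w v ∈ l →
      Node.lf w' χ ∈ l → Node.lf v' θ ∈ l → Node.eq w' v' ∈ l →
      Node.lf x (SCIForm.imp φ χ) ∈ l → Node.lf z (SCIForm.imp ψ θ) ∈ l →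
      Node.eq x z ∉ l →
      ClosedTab (l ++ [Node.eq x z]) E → ClosedTab l E
  | eqIdn (l : List Node) (E : Set (Label × SCIForm)) (w v w' v' x z : Label) (φ ψ χ θ : SCIForm) :
      Node.lf w φ ∈ l → Node.lf v ψ ∈ l → Node.eq w v ∈ l →
      Node.lf w' χ ∈ l → Node.lf v' θ ∈ l → Node.eq w' v' ∈ l →
      Node.lf x (SCIForm.idn φ χ) ∈ l → Node.lf z (SCIForm.idn ψ θ) ∈ l →
      Node.eq x z ∉ l →
      ClosedTab (l ++ [Node.eq x z]) E → ClosedTab l E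
  | ruleF (l : List Node) (E : Set (Label × SCIForm)) (w v : Label) (φ : SCIForm) :
      Node.lf w φ ∈ l → Node.lf v φ ∈ l → Node.eq w v ∉ l →
      ClosedTab (l ++ [Node.eq w v]) E → ClosedTab l E
  | ruleSym (l : List Node) (E : Set (Label × SCIForm)) (w v : Label) :
      Node.eq w v ∈ l → Node.eq v w ∉ l →
      ClosedTab (l ++ [Node.eq v w]) E → ClosedTab l E
  | ruleTran (l : List Node) (E : Set (Label × SCIForm)) (w v u : Label) :
      Node.eq w v ∈ l → Node.eq v u ∈ l → Node.eq w u ∉ l →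
      ClosedTab (l ++ [Node.eq w u]) E → ClosedTab l E

/-- The node matching predicate: is `n` a labelled formula with formula `ψ`? -/
def isLFof (ψ : SCIForm) : Node → Bool
  | Node.lf _ θ => decide (θ = ψ)
  | _ => false

/-- `w : ψ` is the ψ-urfather on the branch `l`: it is the first occurrence of a
labelled formula with formula `ψ` on `l`. -/
def IsUrfather (w : Label) (ψ : SCIForm) (l : List Node) : Prop :=
  l.find? (isLFof ψ) = some (Node.lf w ψ)

/-- One application of a TC_SCI+(UB) rule extending a single branch: as in
TC_SCI, but a decomposition rule may be applied to a labelled formula only if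
it is the urfather of its formula on the branch. -/
inductive ExtendUB : List Node → Set (Label × SCIForm) → List Node → Set (Label × SCIForm) → Prop
  | negP (l : List Node) (E : Set (Label × SCIForm)) (w v : Label) (φ : SCIForm) :
      Node.bot ∉ l → posL w → Node.lf w (SCIForm.not φ) ∈ l → (w, SCIForm.not φ) ∉ E → IsUrfather w (SCIForm.not φ) l →
      negL v → freshL v l →
      ExtendUB l E (l ++ [Node.lf v φ]) (insert (w, SCIForm.not φ) E)
  | negN (l : List Node) (E : Set (Label × SCIForm)) (w v : Label) (φ : SCIForm) :
      Node.bot ∉ l → negL w → Node.lf w (SCIForm.not φ) ∈ l → (w, SCIForm.not φ) ∉ E → IsUrfather w (SCIForm.not φ) l →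
      posL v → freshL v l →
      ExtendUB l E (l ++ [Node.lf v φ]) (insert (w, SCIForm.not φ) E)
  | impP1 (l : List Node) (E : Set (Label × SCIForm)) (w v u : Label) (φ ψ : SCIForm) :
      Node.bot ∉ l → posL w → Node.lf w (SCIForm.imp φ ψ) ∈ l → (w, SCIForm.imp φ ψ) ∉ E → IsUrfather w (SCIForm.imp φ ψ) l →
      negL v → negL u → v ≠ u → freshL v l → freshL u l →
      ExtendUB l E (l ++ [Node.lf v φ, Node.lf u ψ]) (insert (w, SCIForm.imp φ ψ) E)
  | impP2 (l : List Node) (E : Set (Label × SCIForm)) (w v u : Label) (φ ψ : SCIForm) :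
      Node.bot ∉ l → posL w → Node.lf w (SCIForm.imp φ ψ) ∈ l → (w, SCIForm.imp φ ψ) ∉ E → IsUrfather w (SCIForm.imp φ ψ) l →
      negL v → posL u → v ≠ u → freshL v l → freshL u l →
      ExtendUB l E (l ++ [Node.lf v φ, Node.lf u ψ]) (insert (w, SCIForm.imp φ ψ) E)
  | impP3 (l : List Node) (E : Set (Label × SCIForm)) (w v u : Label) (φ ψ : SCIForm) :
      Node.bot ∉ l → posL w → Node.lf w (SCIForm.imp φ ψ) ∈ l → (w, SCIForm.imp φ ψ) ∉ E → IsUrfather w (SCIForm.imp φ ψ) l →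
      posL v → posL u → v ≠ u → freshL v l → freshL u l →
      ExtendUB l E (l ++ [Node.lf v φ, Node.lf u ψ]) (insert (w, SCIForm.imp φ ψ) E)
  | impN (l : List Node) (E : Set (Label × SCIForm)) (w v u : Label) (φ ψ : SCIForm) :
      Node.bot ∉ l → negL w → Node.lf w (SCIForm.imp φ ψ) ∈ l → (w, SCIForm.imp φ ψ) ∉ E → IsUrfather w (SCIForm.imp φ ψ) l →
      posL v → negL u → v ≠ u → freshL v l → freshL u l →
      ExtendUB l E (l ++ [Node.lf v φ, Node.lf u ψ]) (insert (w, SCIForm.imp φ ψ) E)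
  | idnP1 (l : List Node) (E : Set (Label × SCIForm)) (w v u : Label) (φ ψ : SCIForm) :
      Node.bot ∉ l → posL w → Node.lf w (SCIForm.idn φ ψ) ∈ l → (w, SCIForm.idn φ ψ) ∉ E → IsUrfather w (SCIForm.idn φ ψ) l →
      posL v → posL u → v ≠ u → freshL v l → freshL u l →
      ExtendUB l E (l ++ [Node.lf v φ, Node.lf u ψ, Node.eq v u]) (insert (w, SCIForm.idn φ ψ) E)
  | idnP2 (l : List Node) (E : Set (Label × SCIForm)) (w v u : Label) (φ ψ : SCIForm) :
      Node.bot ∉ l → posL w → Node.lf w (SCIForm.idn φ ψ) ∈ l → (w, SCIForm.idn φ ψ) ∉ E → IsUrfather w (SCIForm.idn φ ψ) l →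
      negL v → negL u → v ≠ u → freshL v l → freshL u l →
      ExtendUB l E (l ++ [Node.lf v φ, Node.lf u ψ, Node.eq v u]) (insert (w, SCIForm.idn φ ψ) E)
  | idnN1 (l : List Node) (E : Set (Label × SCIForm)) (w v u : Label) (φ ψ : SCIForm) :
      Node.bot ∉ l → negL w → Node.lf w (SCIForm.idn φ ψ) ∈ l → (w, SCIForm.idn φ ψ) ∉ E → IsUrfather w (SCIForm.idn φ ψ) l →
      posL v → posL u → v ≠ u → freshL v l → freshL u l →
      ExtendUB l E (l ++ [Node.lf v φ, Node.lf u ψ, Node.neq v u]) (insert (w, SCIForm.idn φ ψ) E)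
  | idnN2 (l : List Node) (E : Set (Label × SCIForm)) (w v u : Label) (φ ψ : SCIForm) :
      Node.bot ∉ l → negL w → Node.lf w (SCIForm.idn φ ψ) ∈ l → (w, SCIForm.idn φ ψ) ∉ E → IsUrfather w (SCIForm.idn φ ψ) l →
      posL v → negL u → v ≠ u → freshL v l → freshL u l →
      ExtendUB l E (l ++ [Node.lf v φ, Node.lf u ψ]) (insert (w, SCIForm.idn φ ψ) E)
  | idnN3 (l : List Node) (E : Set (Label × SCIForm)) (w v u : Label) (φ ψ : SCIForm) :
      Node.bot ∉ l → negL w → Node.lf w (SCIForm.idn φ ψ) ∈ l → (w, SCIForm.idn φ ψ) ∉ E → IsUrfather w (SCIForm.idn φ ψ) l →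
      negL v → posL u → v ≠ u → freshL v l → freshL u l →
      ExtendUB l E (l ++ [Node.lf v φ, Node.lf u ψ]) (insert (w, SCIForm.idn φ ψ) E)
  | idnN4 (l : List Node) (E : Set (Label × SCIForm)) (w v u : Label) (φ ψ : SCIForm) :
      Node.bot ∉ l → negL w → Node.lf w (SCIForm.idn φ ψ) ∈ l → (w, SCIForm.idn φ ψ) ∉ E → IsUrfather w (SCIForm.idn φ ψ) l →
      negL v → negL u → v ≠ u → freshL v l → freshL u l →
      ExtendUB l E (l ++ [Node.lf v φ, Node.lf u ψ, Node.neq v u]) (insert (w, SCIForm.idn φ ψ) E)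
  | eqNeg (l : List Node) (E : Set (Label × SCIForm)) (w v u y : Label) (φ ψ : SCIForm) :
      Node.bot ∉ l → Node.lf w φ ∈ l → Node.lf v ψ ∈ l → Node.eq w v ∈ l →
      Node.lf u (SCIForm.not φ) ∈ l → Node.lf y (SCIForm.not ψ) ∈ l →
      Node.eq u y ∉ l →
      ExtendUB l E (l ++ [Node.eq u y]) E
  | eqImp (l : List Node) (E : Set (Label × SCIForm)) (w v w' v' x z : Label) (φ ψ χ θ : SCIForm) :
      Node.bot ∉ l → Node.lf w φ ∈ l → Node.lf v ψ ∈ l → Node.eq w v ∈ l →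
      Node.lf w' χ ∈ l → Node.lf v' θ ∈ l → Node.eq w' v' ∈ l →
      Node.lf x (SCIForm.imp φ χ) ∈ l → Node.lf z (SCIForm.imp ψ θ) ∈ l →
      Node.eq x z ∉ l →
      ExtendUB l E (l ++ [Node.eq x z]) E
  | eqIdn (l : List Node) (E : Set (Label × SCIForm)) (w v w' v' x z : Label) (φ ψ χ θ : SCIForm) :
      Node.bot ∉ l → Node.lf w φ ∈ l → Node.lf v ψ ∈ l → Node.eq w v ∈ l →
      Node.lf w' χ ∈ l → Node.lf v' θ ∈ l → Node.eq w' v' ∈ l →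
      Node.lf x (SCIForm.idn φ χ) ∈ l → Node.lf z (SCIForm.idn ψ θ) ∈ l →
      Node.eq x z ∉ l →
      ExtendUB l E (l ++ [Node.eq x z]) E
  | ruleF (l : List Node) (E : Set (Label × SCIForm)) (w v : Label) (φ : SCIForm) :
      Node.bot ∉ l → Node.lf w φ ∈ l → Node.lf v φ ∈ l → Node.eq w v ∉ l →
      ExtendUB l E (l ++ [Node.eq w v]) E
  | ruleSym (l : List Node) (E : Set (Label × SCIForm)) (w v : Label) :
      Node.bot ∉ l → Node.eq w v ∈ l → Node.eq v w ∉ l →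
      ExtendUB l E (l ++ [Node.eq v w]) E
  | ruleTran (l : List Node) (E : Set (Label × SCIForm)) (w v u : Label) :
      Node.bot ∉ l → Node.eq w v ∈ l → Node.eq v u ∈ l → Node.eq w u ∉ l →
      ExtendUB l E (l ++ [Node.eq w u]) E
  | bot1 (l : List Node) (E : Set (Label × SCIForm)) (w v : Label) :
      Node.bot ∉ l → Node.eq w v ∈ l → Node.neq w v ∈ l →
      ExtendUB l E (l ++ [Node.bot]) E
  | bot2 (l : List Node) (E : Set (Label × SCIForm)) (w v : Label) :
      Node.bot ∉ l → posL w → negL v → Node.eq w v ∈ l →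
      ExtendUB l E (l ++ [Node.bot]) E

/-- `ClosedTabUB l E`: there is a closed TC_SCI+(UB)-tableau all of whose
branches extend the branch `l` (urfather blocking imposed on decomposition rules). -/
inductive ClosedTabUB : List Node → Set (Label × SCIForm) → Prop
  | clos1 (l : List Node) (E : Set (Label × SCIForm)) (w v : Label) :
      Node.eq w v ∈ l → Node.neq w v ∈ l → ClosedTabUB l E
  | clos2 (l : List Node) (E : Set (Label × SCIForm)) (w v : Label) :
      posL w → negL v → Node.eq w v ∈ l → ClosedTabUB l E
  | negP (l : List Node) (E : Set (Label × SCIForm)) (w v : Label) (φ : SCIForm) :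
      posL w → Node.lf w (SCIForm.not φ) ∈ l → (w, SCIForm.not φ) ∉ E → IsUrfather w (SCIForm.not φ) l →
      negL v → freshL v l →
      ClosedTabUB (l ++ [Node.lf v φ]) (insert (w, SCIForm.not φ) E) →
      ClosedTabUB l E
  | negN (l : List Node) (E : Set (Label × SCIForm)) (w v : Label) (φ : SCIForm) :
      negL w → Node.lf w (SCIForm.not φ) ∈ l → (w, SCIForm.not φ) ∉ E → IsUrfather w (SCIForm.not φ) l →
      posL v → freshL v l →
      ClosedTabUB (l ++ [Node.lf v φ]) (insert (w, SCIForm.not φ) E) →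
      ClosedTabUB l E
  | impP (l : List Node) (E : Set (Label × SCIForm)) (w : Label) (φ ψ : SCIForm)
      (v1 u1 v2 u2 v3 u3 : Label) :
      posL w → Node.lf w (SCIForm.imp φ ψ) ∈ l → (w, SCIForm.imp φ ψ) ∉ E → IsUrfather w (SCIForm.imp φ ψ) l →
      negL v1 → negL u1 → v1 ≠ u1 → freshL v1 l → freshL u1 l →
      negL v2 → posL u2 → v2 ≠ u2 → freshL v2 l → freshL u2 l →
      posL v3 → posL u3 → v3 ≠ u3 → freshL v3 l → freshL u3 l →
      ClosedTabUB (l ++ [Node.lf v1 φ, Node.lf u1 ψ]) (insert (w, SCIForm.imp φ ψ) E) →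
      ClosedTabUB (l ++ [Node.lf v2 φ, Node.lf u2 ψ]) (insert (w, SCIForm.imp φ ψ) E) →
      ClosedTabUB (l ++ [Node.lf v3 φ, Node.lf u3 ψ]) (insert (w, SCIForm.imp φ ψ) E) →
      ClosedTabUB l E
  | impN (l : List Node) (E : Set (Label × SCIForm)) (w v u : Label) (φ ψ : SCIForm) :
      negL w → Node.lf w (SCIForm.imp φ ψ) ∈ l → (w, SCIForm.imp φ ψ) ∉ E → IsUrfather w (SCIForm.imp φ ψ) l →
      posL v → negL u → v ≠ u → freshL v l → freshL u l →
      ClosedTabUB (l ++ [Node.lf v φ, Node.lf u ψ]) (insert (w, SCIForm.imp φ ψ) E) →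
      ClosedTabUB l E
  | idnP (l : List Node) (E : Set (Label × SCIForm)) (w : Label) (φ ψ : SCIForm)
      (v1 u1 v2 u2 : Label) :
      posL w → Node.lf w (SCIForm.idn φ ψ) ∈ l → (w, SCIForm.idn φ ψ) ∉ E → IsUrfather w (SCIForm.idn φ ψ) l →
      posL v1 → posL u1 → v1 ≠ u1 → freshL v1 l → freshL u1 l →
      negL v2 → negL u2 → v2 ≠ u2 → freshL v2 l → freshL u2 l →
      ClosedTabUB (l ++ [Node.lf v1 φ, Node.lf u1 ψ, Node.eq v1 u1]) (insert (w, SCIForm.idn φ ψ) E) →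
      ClosedTabUB (l ++ [Node.lf v2 φ, Node.lf u2 ψ, Node.eq v2 u2]) (insert (w, SCIForm.idn φ ψ) E) →
      ClosedTabUB l E
  | idnN (l : List Node) (E : Set (Label × SCIForm)) (w : Label) (φ ψ : SCIForm)
      (v1 u1 v2 u2 v3 u3 v4 u4 : Label) :
      negL w → Node.lf w (SCIForm.idn φ ψ) ∈ l → (w, SCIForm.idn φ ψ) ∉ E → IsUrfather w (SCIForm.idn φ ψ) l →
      posL v1 → posL u1 → v1 ≠ u1 → freshL v1 l → freshL u1 l →
      posL v2 → negL u2 → v2 ≠ u2 → freshL v2 l → freshL u2 l →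
      negL v3 → posL u3 → v3 ≠ u3 → freshL v3 l → freshL u3 l →
      negL v4 → negL u4 → v4 ≠ u4 → freshL v4 l → freshL u4 l →
      ClosedTabUB (l ++ [Node.lf v1 φ, Node.lf u1 ψ, Node.neq v1 u1]) (insert (w, SCIForm.idn φ ψ) E) →
      ClosedTabUB (l ++ [Node.lf v2 φ, Node.lf u2 ψ]) (insert (w, SCIForm.idn φ ψ) E) →
      ClosedTabUB (l ++ [Node.lf v3 φ, Node.lf u3 ψ]) (insert (w, SCIForm.idn φ ψ) E) →
      ClosedTabUB (l ++ [Node.lf v4 φ, Node.lf u4 ψ, Node.neq v4 u4]) (insert (w, SCIForm.idn φ ψ) E) →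
      ClosedTabUB l E
  | eqNeg (l : List Node) (E : Set (Label × SCIForm)) (w v u y : Label) (φ ψ : SCIForm) :
      Node.lf w φ ∈ l → Node.lf v ψ ∈ l → Node.eq w v ∈ l →
      Node.lf u (SCIForm.not φ) ∈ l → Node.lf y (SCIForm.not ψ) ∈ l →
      Node.eq u y ∉ l →
      ClosedTabUB (l ++ [Node.eq u y]) E → ClosedTabUB l E
  | eqImp (l : List Node) (E : Set (Label × SCIForm)) (w v w' v' x z : Label) (φ ψ χ θ : SCIForm) :
      Node.lf w φ ∈ l → Node.lf v ψ ∈ l → Node.eq w v ∈ l →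
      Node.lf w' χ ∈ l → Node.lf v' θ ∈ l → Node.eq w' v' ∈ l →
      Node.lf x (SCIForm.imp φ χ) ∈ l → Node.lf z (SCIForm.imp ψ θ) ∈ l →
      Node.eq x z ∉ l →
      ClosedTabUB (l ++ [Node.eq x z]) E → ClosedTabUB l E
  | eqIdn (l : List Node) (E : Set (Label × SCIForm)) (w v w' v' x z : Label) (φ ψ χ θ : SCIForm) :
      Node.lf w φ ∈ l → Node.lf v ψ ∈ l → Node.eq w v ∈ l →
      Node.lf w' χ ∈ l → Node.lf v' θ ∈ l → Node.eq w' v' ∈ l →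
      Node.lf x (SCIForm.idn φ χ) ∈ l → Node.lf z (SCIForm.idn ψ θ) ∈ l →
      Node.eq x z ∉ l →
      ClosedTabUB (l ++ [Node.eq x z]) E → ClosedTabUB l E
  | ruleF (l : List Node) (E : Set (Label × SCIForm)) (w v : Label) (φ : SCIForm) :
      Node.lf w φ ∈ l → Node.lf v φ ∈ l → Node.eq w v ∉ l →
      ClosedTabUB (l ++ [Node.eq w v]) E → ClosedTabUB l E
  | ruleSym (l : List Node) (E : Set (Label × SCIForm)) (w v : Label) :
      Node.eq w v ∈ l → Node.eq v w ∉ l →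
      ClosedTabUB (l ++ [Node.eq v w]) E → ClosedTabUB l E
  | ruleTran (l : List Node) (E : Set (Label × SCIForm)) (w v u : Label) :
      Node.eq w v ∈ l → Node.eq v u ∈ l → Node.eq w u ∉ l →
      ClosedTabUB (l ++ [Node.eq w u]) E → ClosedTabUB l E
/-! ### Auxiliary machinery for the urfather-blocking simulation -/

/-- Apply a label renaming to a node. -/
def mapN (σ : Label → Label) : Node → Node
  | Node.lf w φ => Node.lf (σ w) φ
  | Node.eq w v => Node.eq (σ w) (σ v)
  | Node.neq w v => Node.neq (σ w) (σ v)
  | Node.bot => Node.bot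

lemma mapN_id : ∀ n : Node, mapN id n = n := by
  intro n; cases n <;> rfl

/-- Update a renaming at one point. -/
def updL (σ : Label → Label) (x y : Label) : Label → Label :=
  fun z => if z = x then y else σ z

lemma updL_pol {σ : Label → Label} (hpol : ∀ x, (σ x).1 = x.1) {x y : Label}
    (hxy : y.1 = x.1) : ∀ z, (updL σ x y z).1 = z.1 := by
  intro z; unfold updL; split
  · next h => rw [h]; exact hxy
  · exact hpol z

/-- A branch is well-labelled: every label in an (in)equality node also labels
some formula on the branch. -/
def WLbr (l : List Node) : Prop :=
  ∀ w v : Label, (Node.eq w v ∈ l ∨ Node.neq w v ∈ l) →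
    (∃ φ, Node.lf w φ ∈ l) ∧ (∃ φ, Node.lf v φ ∈ l)

lemma mapN_updL {l : List Node} {σ : Label → Label} {x y : Label}
    (hf : freshL x l) (hwl : WLbr l) : ∀ n ∈ l, mapN (updL σ x y) n = mapN σ n := by
  have key : ∀ z : Label, (∃ φ, Node.lf z φ ∈ l) → updL σ x y z = σ z := by
    rintro z ⟨φ, hz⟩
    have hzx : z ≠ x := fun h => hf φ (h ▸ hz)
    simp [updL, hzx]
  intro n hn
  cases n with
  | lf w φ => simp [mapN, key w ⟨φ, hn⟩]
  | eq w v =>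
    obtain ⟨h1, h2⟩ := hwl w v (Or.inl hn)
    simp [mapN, key w h1, key v h2]
  | neq w v =>
    obtain ⟨h1, h2⟩ := hwl w v (Or.inr hn)
    simp [mapN, key w h1, key v h2]
  | bot => rfl

lemma mapN_updL2 {l : List Node} {σ : Label → Label} {x y x' y' : Label}
    (hf : freshL x l) (hf' : freshL x' l) (hwl : WLbr l) :
    ∀ n ∈ l, mapN (updL (updL σ x y) x' y') n = mapN σ n := by
  intro n hn
  rw [mapN_updL hf' hwl n hn, mapN_updL hf hwl n hn]

/-- Extend a containment `mapN σ '' l ⊆ L` to appended branches. -/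
lemma sub_ext {l new L L' : List Node} {σ σ' : Label → Label}
    (hsub : ∀ n ∈ l, mapN σ n ∈ L) (hag : ∀ n ∈ l, mapN σ' n = mapN σ n)
    (hLL : ∀ n ∈ L, n ∈ L') (hnew : ∀ n ∈ new, mapN σ' n ∈ L') :
    ∀ n ∈ l ++ new, mapN σ' n ∈ L' := by
  intro n hn
  rcases List.mem_append.1 hn with h | h
  · rw [hag n h]; exact hLL _ (hsub n h)
  · exact hnew n h

lemma WL_ext {l new : List Node} (hwl : WLbr l)
    (hnew : ∀ w v : Label, (Node.eq w v ∈ new ∨ Node.neq w v ∈ new) →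
      (∃ φ, Node.lf w φ ∈ l ++ new) ∧ (∃ φ, Node.lf v φ ∈ l ++ new)) :
    WLbr (l ++ new) := by
  intro w v h
  have lift : (∃ φ, Node.lf w φ ∈ l) ∧ (∃ φ, Node.lf v φ ∈ l) →
      (∃ φ, Node.lf w φ ∈ l ++ new) ∧ (∃ φ, Node.lf v φ ∈ l ++ new) := by
    rintro ⟨⟨φ1, h1⟩, ⟨φ2, h2⟩⟩
    exact ⟨⟨φ1, List.mem_append_left _ h1⟩, ⟨φ2, List.mem_append_left _ h2⟩⟩
  rcases h with h | h <;> rcases List.mem_append.1 h with h' | h'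
  · exact lift (hwl w v (Or.inl h'))
  · exact hnew w v (Or.inl h')
  · exact lift (hwl w v (Or.inr h'))
  · exact hnew w v (Or.inr h')

/-- Maximal index of a formula label on a branch. -/
def maxI : List Node → ℕ
  | [] => 0
  | Node.lf w _ :: t => max w.2 (maxI t)
  | _ :: t => maxI t

lemma freshL_of_gt {n : ℕ} (p : Bool) : ∀ L : List Node, maxI L < n → freshL (p, n) L := by
  intro L
  induction L with
  | nil => intro _ φ h; simp at h
  | cons a t ih =>
    intro h φ hm
    rcases List.mem_cons.1 hm with he | hm'
    · cases a with
      | lf u ψ =>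
        have : u.2 < n := by simp [maxI] at h; omega
        have := congrArg (fun m : Node => match m with | Node.lf z _ => z.2 | _ => 0) he
        simp at this
        omega
      | eq u y => exact Node.noConfusion he
      | neq u y => exact Node.noConfusion he
      | bot => exact Node.noConfusion he
    · refine ih ?_ φ hm'
      cases a <;> simp [maxI] at h ⊢ <;> omega

lemma urfather_exists {ψ : SCIForm} {L : List Node} {x : Label}
    (h : Node.lf x ψ ∈ L) : ∃ u, IsUrfather u ψ L := by
  have h1 : (L.find? (isLFof ψ)).isSome := by
    rw [List.find?_isSome]
    exact ⟨_, h, by simp [isLFof]⟩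
  obtain ⟨n, hn⟩ := Option.isSome_iff_exists.mp h1
  have h2 := List.find?_some hn
  cases n with
  | lf u θ =>
    have : θ = ψ := by simpa [isLFof] using h2
    subst this; exact ⟨u, hn⟩
  | eq a b => simp [isLFof] at h2
  | neq a b => simp [isLFof] at h2
  | bot => simp [isLFof] at h2

lemma urfather_mem {u : Label} {ψ : SCIForm} {L : List Node}
    (h : IsUrfather u ψ L) : Node.lf u ψ ∈ L :=
  List.mem_of_find?_eq_some h

/-- If two occurrences of the same formula carry labels of opposite polarity,
the branch closes (by (F) and (⊥₂)). -/
lemma close_mismatch {L : List Node} {ψ : SCIForm} {a b : Label}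
    (F : Set (Label × SCIForm))
    (ha : posL a) (hb : negL b) (hma : Node.lf a ψ ∈ L) (hmb : Node.lf b ψ ∈ L) :
    ClosedTabUB L F := by
  by_cases h : Node.eq a b ∈ L
  · exact ClosedTabUB.clos2 L F a b ha hb h
  · exact ClosedTabUB.ruleF L F a b ψ hma hmb h
      (ClosedTabUB.clos2 _ F a b ha hb (by simp))
/-- `DecDone p ψ L`: the conclusions of some branch of the decomposition rule
for a `p`-polarity occurrence of `ψ` are already present on `L`. -/
def DecDone : Bool → SCIForm → List Node → Prop
  | _, SCIForm.atom _, _ => True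
  | true, SCIForm.not φ, L => ∃ v : Label, negL v ∧ Node.lf v φ ∈ L
  | false, SCIForm.not φ, L => ∃ v : Label, posL v ∧ Node.lf v φ ∈ L
  | true, SCIForm.imp φ χ, L => ∃ v u : Label, Node.lf v φ ∈ L ∧ Node.lf u χ ∈ L ∧
      ((negL v ∧ negL u) ∨ (negL v ∧ posL u) ∨ (posL v ∧ posL u))
  | false, SCIForm.imp φ χ, L => ∃ v u : Label, posL v ∧ negL u ∧
      Node.lf v φ ∈ L ∧ Node.lf u χ ∈ L
  | true, SCIForm.idn φ χ, L => ∃ v u : Label, Node.lf v φ ∈ L ∧ Node.lf u χ ∈ L ∧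
      Node.eq v u ∈ L ∧ ((posL v ∧ posL u) ∨ (negL v ∧ negL u))
  | false, SCIForm.idn φ χ, L => ∃ v u : Label, Node.lf v φ ∈ L ∧ Node.lf u χ ∈ L ∧
      ((posL v ∧ posL u ∧ Node.neq v u ∈ L) ∨ (posL v ∧ negL u) ∨ (negL v ∧ posL u) ∨
       (negL v ∧ negL u ∧ Node.neq v u ∈ L))

lemma DecDone_mono {L L' : List Node} (hLL : ∀ n ∈ L, n ∈ L') :
    ∀ (p : Bool) (ψ : SCIForm), DecDone p ψ L → DecDone p ψ L'
  | true, SCIForm.atom _, _ => trivial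
  | false, SCIForm.atom _, _ => trivial
  | true, SCIForm.not _, ⟨v, h1, h2⟩ => ⟨v, h1, hLL _ h2⟩
  | false, SCIForm.not _, ⟨v, h1, h2⟩ => ⟨v, h1, hLL _ h2⟩
  | true, SCIForm.imp _ _, ⟨v, u, h1, h2, h3⟩ => ⟨v, u, hLL _ h1, hLL _ h2, h3⟩
  | false, SCIForm.imp _ _, ⟨v, u, h1, h2, h3, h4⟩ => ⟨v, u, h1, h2, hLL _ h3, hLL _ h4⟩
  | true, SCIForm.idn _ _, ⟨v, u, h1, h2, h3, h4⟩ => ⟨v, u, hLL _ h1, hLL _ h2, hLL _ h3, h4⟩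
  | false, SCIForm.idn _ _, ⟨v, u, h1, h2, h3⟩ =>
      ⟨v, u, hLL _ h1, hLL _ h2, by
        rcases h3 with ⟨a, b, c⟩ | h | h | ⟨a, b, c⟩
        · exact Or.inl ⟨a, b, hLL _ c⟩
        · exact Or.inr (Or.inl h)
        · exact Or.inr (Or.inr (Or.inl h))
        · exact Or.inr (Or.inr (Or.inr ⟨a, b, hLL _ c⟩))⟩

/-- Invariant on the set of already-decomposed labelled formulas. -/
def InvE (F : Set (Label × SCIForm)) (L : List Node) : Prop :=
  ∀ p ∈ F, DecDone p.1.1 p.2 L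

lemma InvE_mono {F : Set (Label × SCIForm)} {L L' : List Node}
    (hLL : ∀ n ∈ L, n ∈ L') (h : InvE F L) : InvE F L' :=
  fun p hp => DecDone_mono hLL _ _ (h p hp)

lemma InvE_insert {F : Set (Label × SCIForm)} {L : List Node} {u : Label} {ψ : SCIForm}
    (h : InvE F L) (hd : DecDone u.1 ψ L) : InvE (insert (u, ψ) F) L := by
  intro p hp
  rcases Set.mem_insert_iff.1 hp with rfl | hp
  · exact hd
  · exact h p hp

lemma ne12 (p q : Bool) (N : ℕ) : (p, N + 1) ≠ (q, N + 2) := by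
  intro h
  have := congrArg Prod.snd h
  simp at this
/-- Generic treatment of an equality-rule step in the simulation. -/
lemma eq_case {l L : List Node} {σ : Label → Label} {F : Set (Label × SCIForm)} {a b : Label}
    (hpol : ∀ x : Label, (σ x).1 = x.1) (hsub : ∀ n ∈ l, mapN σ n ∈ L) (hwl : WLbr l)
    (hinv : InvE F L)
    (hwit1 : ∃ φ, Node.lf a φ ∈ l) (hwit2 : ∃ φ, Node.lf b φ ∈ l)
    (hrule : Node.eq (σ a) (σ b) ∉ L → ClosedTabUB (L ++ [Node.eq (σ a) (σ b)]) F →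
      ClosedTabUB L F)
    (ih : ∀ (σ' : Label → Label) (L' : List Node) (F' : Set (Label × SCIForm)),
       (∀ x : Label, (σ' x).1 = x.1) →
       (∀ n ∈ l ++ [Node.eq a b], mapN σ' n ∈ L') → WLbr (l ++ [Node.eq a b]) → InvE F' L' →
       ClosedTabUB L' F') :
    ClosedTabUB L F := by
  have hwl' : WLbr (l ++ [Node.eq a b]) := by
    refine WL_ext hwl ?_
    intro w v h
    rcases h with h | h <;> simp at h
    obtain ⟨rfl, rfl⟩ := h
    obtain ⟨φ1, h1⟩ := hwit1; obtain ⟨φ2, h2⟩ := hwit2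
    exact ⟨⟨φ1, List.mem_append_left _ h1⟩, ⟨φ2, List.mem_append_left _ h2⟩⟩
  by_cases h : Node.eq (σ a) (σ b) ∈ L
  · refine ih σ L F hpol ?_ hwl' hinv
    intro n hn
    rcases List.mem_append.1 hn with h' | h'
    · exact hsub _ h'
    · simp at h'; subst h'; exact h
  · refine hrule h (ih σ (L ++ [Node.eq (σ a) (σ b)]) F hpol ?_ hwl'
      (InvE_mono (fun n => List.mem_append_left _) hinv))
    intro n hn
    rcases List.mem_append.1 hn with h' | h'
    · exact List.mem_append_left _ (hsub _ h')
    · simp at h'; subst h'; simp [mapN]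

/-- Simulation of a decomposition step with one fresh label `v`, redirected to
an existing label `a` on the UB branch. -/
lemma reuse1 {l L : List Node} {σ : Label → Label} {F : Set (Label × SCIForm)}
    {v a : Label} {φ : SCIForm}
    (hpol : ∀ x : Label, (σ x).1 = x.1) (hsub : ∀ n ∈ l, mapN σ n ∈ L) (hwl : WLbr l)
    (hinv : InvE F L) (hfv : freshL v l) (hav : a.1 = v.1) (hma : Node.lf a φ ∈ L)
    (ih : ∀ (σ' : Label → Label) (L' : List Node) (F' : Set (Label × SCIForm)),
       (∀ x : Label, (σ' x).1 = x.1) →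
       (∀ n ∈ l ++ [Node.lf v φ], mapN σ' n ∈ L') → WLbr (l ++ [Node.lf v φ]) → InvE F' L' →
       ClosedTabUB L' F') :
    ClosedTabUB L F := by
  refine ih (updL σ v a) L F (updL_pol hpol hav) ?_ ?_ hinv
  · refine sub_ext hsub (mapN_updL hfv hwl) (fun n h => h) ?_
    intro n hn
    simp only [List.mem_singleton] at hn
    subst hn
    simpa [mapN, updL] using hma
  · exact WL_ext hwl (by intro a' b' h; rcases h with h | h <;> simp at h)

/-- Simulation of a decomposition step with two fresh labels, redirected to
existing labels. -/
lemma reuse2 {l L : List Node} {σ : Label → Label} {F : Set (Label × SCIForm)}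
    {v u a b : Label} {φ ψ : SCIForm}
    (hpol : ∀ x : Label, (σ x).1 = x.1) (hsub : ∀ n ∈ l, mapN σ n ∈ L) (hwl : WLbr l)
    (hinv : InvE F L) (hvu : v ≠ u) (hfv : freshL v l) (hfu : freshL u l)
    (hav : a.1 = v.1) (hbu : b.1 = u.1)
    (hma : Node.lf a φ ∈ L) (hmb : Node.lf b ψ ∈ L)
    (ih : ∀ (σ' : Label → Label) (L' : List Node) (F' : Set (Label × SCIForm)),
       (∀ x : Label, (σ' x).1 = x.1) →
       (∀ n ∈ l ++ [Node.lf v φ, Node.lf u ψ], mapN σ' n ∈ L') →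
       WLbr (l ++ [Node.lf v φ, Node.lf u ψ]) → InvE F' L' → ClosedTabUB L' F') :
    ClosedTabUB L F := by
  refine ih (updL (updL σ v a) u b) L F (updL_pol (updL_pol hpol hav) hbu) ?_ ?_ hinv
  · refine sub_ext hsub (mapN_updL2 hfv hfu hwl) (fun n h => h) ?_
    intro n hn
    rcases List.mem_cons.1 hn with rfl | hn
    · simpa [mapN, updL, hvu] using hma
    · rcases List.mem_cons.1 hn with rfl | hn
      · simpa [mapN, updL] using hmb
      · simp at hn
  · exact WL_ext hwl (by intro a' b' h; rcases h with h | h <;> simp at h)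

/-- As `reuse2`, with an additional equality conclusion. -/
lemma reuse2eq {l L : List Node} {σ : Label → Label} {F : Set (Label × SCIForm)}
    {v u a b : Label} {φ ψ : SCIForm}
    (hpol : ∀ x : Label, (σ x).1 = x.1) (hsub : ∀ n ∈ l, mapN σ n ∈ L) (hwl : WLbr l)
    (hinv : InvE F L) (hvu : v ≠ u) (hfv : freshL v l) (hfu : freshL u l)
    (hav : a.1 = v.1) (hbu : b.1 = u.1)
    (hma : Node.lf a φ ∈ L) (hmb : Node.lf b ψ ∈ L) (hme : Node.eq a b ∈ L)
    (ih : ∀ (σ' : Label → Label) (L' : List Node) (F' : Set (Label × SCIForm)),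
       (∀ x : Label, (σ' x).1 = x.1) →
       (∀ n ∈ l ++ [Node.lf v φ, Node.lf u ψ, Node.eq v u], mapN σ' n ∈ L') →
       WLbr (l ++ [Node.lf v φ, Node.lf u ψ, Node.eq v u]) → InvE F' L' → ClosedTabUB L' F') :
    ClosedTabUB L F := by
  refine ih (updL (updL σ v a) u b) L F (updL_pol (updL_pol hpol hav) hbu) ?_ ?_ hinv
  · refine sub_ext hsub (mapN_updL2 hfv hfu hwl) (fun n h => h) ?_
    intro n hn
    rcases List.mem_cons.1 hn with rfl | hn
    · simpa [mapN, updL, hvu] using hma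
    · rcases List.mem_cons.1 hn with rfl | hn
      · simpa [mapN, updL] using hmb
      · rcases List.mem_cons.1 hn with rfl | hn
        · simpa [mapN, updL, hvu] using hme
        · simp at hn
  · refine WL_ext hwl ?_
    intro a' b' h
    rcases h with h | h <;> simp at h
    obtain ⟨rfl, rfl⟩ := h
    exact ⟨⟨φ, by simp⟩, ⟨ψ, by simp⟩⟩

/-- As `reuse2`, with an additional inequality conclusion. -/
lemma reuse2neq {l L : List Node} {σ : Label → Label} {F : Set (Label × SCIForm)}
    {v u a b : Label} {φ ψ : SCIForm}
    (hpol : ∀ x : Label, (σ x).1 = x.1) (hsub : ∀ n ∈ l, mapN σ n ∈ L) (hwl : WLbr l)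
    (hinv : InvE F L) (hvu : v ≠ u) (hfv : freshL v l) (hfu : freshL u l)
    (hav : a.1 = v.1) (hbu : b.1 = u.1)
    (hma : Node.lf a φ ∈ L) (hmb : Node.lf b ψ ∈ L) (hme : Node.neq a b ∈ L)
    (ih : ∀ (σ' : Label → Label) (L' : List Node) (F' : Set (Label × SCIForm)),
       (∀ x : Label, (σ' x).1 = x.1) →
       (∀ n ∈ l ++ [Node.lf v φ, Node.lf u ψ, Node.neq v u], mapN σ' n ∈ L') →
       WLbr (l ++ [Node.lf v φ, Node.lf u ψ, Node.neq v u]) → InvE F' L' → ClosedTabUB L' F') :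
    ClosedTabUB L F := by
  refine ih (updL (updL σ v a) u b) L F (updL_pol (updL_pol hpol hav) hbu) ?_ ?_ hinv
  · refine sub_ext hsub (mapN_updL2 hfv hfu hwl) (fun n h => h) ?_
    intro n hn
    rcases List.mem_cons.1 hn with rfl | hn
    · simpa [mapN, updL, hvu] using hma
    · rcases List.mem_cons.1 hn with rfl | hn
      · simpa [mapN, updL] using hmb
      · rcases List.mem_cons.1 hn with rfl | hn
        · simpa [mapN, updL, hvu] using hme
        · simp at hn
  · refine WL_ext hwl ?_
    intro a' b' h
    rcases h with h | h <;> simp at h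
    obtain ⟨rfl, rfl⟩ := h
    exact ⟨⟨φ, by simp⟩, ⟨ψ, by simp⟩⟩
lemma keyUB : ∀ {l : List Node} {E : Set (Label × SCIForm)}, ClosedTab l E →
    ∀ (σ : Label → Label) (L : List Node) (F : Set (Label × SCIForm)),
      (∀ x : Label, (σ x).1 = x.1) → (∀ n ∈ l, mapN σ n ∈ L) → WLbr l → InvE F L →
      ClosedTabUB L F := by
  intro l E h
  induction h with
  | clos1 l E w v h1 h2 =>
    intro σ L F hpol hsub hwl hinv
    exact ClosedTabUB.clos1 L F (σ w) (σ v) (hsub _ h1) (hsub _ h2)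
  | clos2 l E w v hpw hnv h1 =>
    intro σ L F hpol hsub hwl hinv
    exact ClosedTabUB.clos2 L F (σ w) (σ v) ((hpol w).trans hpw) ((hpol v).trans hnv)
      (hsub _ h1)
  | negP l E w v φ hpw hmem hE hnv hfv _ ih =>
    intro σ L F hpol hsub hwl hinv
    have hmw : Node.lf (σ w) (SCIForm.not φ) ∈ L := hsub _ hmem
    obtain ⟨u, hu⟩ := urfather_exists hmw
    have hum : Node.lf u (SCIForm.not φ) ∈ L := urfather_mem hu
    by_cases hup : u.1 = true
    · by_cases hin : (u, SCIForm.not φ) ∈ F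
      · have hd0 : DecDone u.1 (SCIForm.not φ) L := hinv _ hin
        rw [hup] at hd0
        have hd : ∃ a : Label, negL a ∧ Node.lf a φ ∈ L := hd0
        obtain ⟨a, hna, hma⟩ := hd
        exact reuse1 hpol hsub hwl hinv hfv ((hna : a.1 = false).trans
          ((hnv : v.1 = false)).symm) hma ih
      · refine ClosedTabUB.negP L F u (false, maxI L + 1) φ hup hum hin hu rfl
          (freshL_of_gt false L (by omega)) ?_
        refine reuse1 hpol (fun n h => List.mem_append_left _ (hsub n h)) hwl
          (InvE_insert (InvE_mono (fun n => List.mem_append_left _) hinv) ?_)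
          hfv ((rfl : ((false, maxI L + 1) : Label).1 = false).trans
            ((hnv : v.1 = false)).symm) (by simp) ih
        rw [hup]
        exact ⟨(false, maxI L + 1), rfl, by simp⟩
    · have hun : u.1 = false := by simpa using hup
      exact close_mismatch F ((hpol w).trans hpw) hun hmw hum
  | negN l E w v φ hnw hmem hE hpv hfv _ ih =>
    intro σ L F hpol hsub hwl hinv
    have hmw : Node.lf (σ w) (SCIForm.not φ) ∈ L := hsub _ hmem
    obtain ⟨u, hu⟩ := urfather_exists hmw
    have hum : Node.lf u (SCIForm.not φ) ∈ L := urfather_mem hu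
    by_cases hup : u.1 = true
    · exact close_mismatch F hup ((hpol w).trans hnw) hum hmw
    · have hun : u.1 = false := by simpa using hup
      by_cases hin : (u, SCIForm.not φ) ∈ F
      · have hd0 : DecDone u.1 (SCIForm.not φ) L := hinv _ hin
        rw [hun] at hd0
        have hd : ∃ a : Label, posL a ∧ Node.lf a φ ∈ L := hd0
        obtain ⟨a, hpa, hma⟩ := hd
        exact reuse1 hpol hsub hwl hinv hfv ((hpa : a.1 = true).trans
          ((hpv : v.1 = true)).symm) hma ih
      · refine ClosedTabUB.negN L F u (true, maxI L + 1) φ hun hum hin hu rfl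
          (freshL_of_gt true L (by omega)) ?_
        refine reuse1 hpol (fun n h => List.mem_append_left _ (hsub n h)) hwl
          (InvE_insert (InvE_mono (fun n => List.mem_append_left _) hinv) ?_)
          hfv ((rfl : ((true, maxI L + 1) : Label).1 = true).trans
            ((hpv : v.1 = true)).symm) (by simp) ih
        rw [hun]
        exact ⟨(true, maxI L + 1), rfl, by simp⟩
  | impP l E w φ ψ v1 u1 v2 u2 v3 u3 hpw hmem hE hn1 hm1 hd1 hf1 hg1 hn2 hp2 hd2 hf2 hg2
      hp3 hq3 hd3 hf3 hg3 _ _ _ ih1 ih2 ih3 =>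
    intro σ L F hpol hsub hwl hinv
    have hmw : Node.lf (σ w) (SCIForm.imp φ ψ) ∈ L := hsub _ hmem
    obtain ⟨a0, ha0⟩ := urfather_exists hmw
    have hum : Node.lf a0 (SCIForm.imp φ ψ) ∈ L := urfather_mem ha0
    by_cases hup : a0.1 = true
    · by_cases hin : (a0, SCIForm.imp φ ψ) ∈ F
      · have hd0 : DecDone a0.1 (SCIForm.imp φ ψ) L := hinv _ hin
        rw [hup] at hd0
        have hd : ∃ a b : Label, Node.lf a φ ∈ L ∧ Node.lf b ψ ∈ L ∧
            ((negL a ∧ negL b) ∨ (negL a ∧ posL b) ∨ (posL a ∧ posL b)) := hd0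
        obtain ⟨a, b, hma, hmb, hc⟩ := hd
        rcases hc with ⟨hca, hcb⟩ | ⟨hca, hcb⟩ | ⟨hca, hcb⟩
        · exact reuse2 hpol hsub hwl hinv hd1 hf1 hg1
            ((hca : a.1 = false).trans ((hn1 : v1.1 = false)).symm)
            ((hcb : b.1 = false).trans ((hm1 : u1.1 = false)).symm) hma hmb ih1
        · exact reuse2 hpol hsub hwl hinv hd2 hf2 hg2
            ((hca : a.1 = false).trans ((hn2 : v2.1 = false)).symm)
            ((hcb : b.1 = true).trans ((hp2 : u2.1 = true)).symm) hma hmb ih2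
        · exact reuse2 hpol hsub hwl hinv hd3 hf3 hg3
            ((hca : a.1 = true).trans ((hp3 : v3.1 = true)).symm)
            ((hcb : b.1 = true).trans ((hq3 : u3.1 = true)).symm) hma hmb ih3
      · refine ClosedTabUB.impP L F a0 φ ψ (false, maxI L + 1) (false, maxI L + 2)
          (false, maxI L + 1) (true, maxI L + 2) (true, maxI L + 1) (true, maxI L + 2)
          hup hum hin ha0
          rfl rfl (ne12 _ _ _) (freshL_of_gt false L (by omega)) (freshL_of_gt false L (by omega))
          rfl rfl (ne12 _ _ _) (freshL_of_gt false L (by omega)) (freshL_of_gt true L (by omega))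
          rfl rfl (ne12 _ _ _) (freshL_of_gt true L (by omega)) (freshL_of_gt true L (by omega))
          ?_ ?_ ?_
        · refine reuse2 hpol (fun n h => List.mem_append_left _ (hsub n h)) hwl
            (InvE_insert (InvE_mono (fun n => List.mem_append_left _) hinv) ?_)
            hd1 hf1 hg1
            ((rfl : ((false, maxI L + 1) : Label).1 = false).trans ((hn1 : v1.1 = false)).symm)
            ((rfl : ((false, maxI L + 2) : Label).1 = false).trans ((hm1 : u1.1 = false)).symm)
            (by simp) (by simp) ih1
          rw [hup]
          exact ⟨(false, maxI L + 1), (false, maxI L + 2), by simp, by simp,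
            Or.inl ⟨rfl, rfl⟩⟩
        · refine reuse2 hpol (fun n h => List.mem_append_left _ (hsub n h)) hwl
            (InvE_insert (InvE_mono (fun n => List.mem_append_left _) hinv) ?_)
            hd2 hf2 hg2
            ((rfl : ((false, maxI L + 1) : Label).1 = false).trans ((hn2 : v2.1 = false)).symm)
            ((rfl : ((true, maxI L + 2) : Label).1 = true).trans ((hp2 : u2.1 = true)).symm)
            (by simp) (by simp) ih2
          rw [hup]
          exact ⟨(false, maxI L + 1), (true, maxI L + 2), by simp, by simp,
            Or.inr (Or.inl ⟨rfl, rfl⟩)⟩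
        · refine reuse2 hpol (fun n h => List.mem_append_left _ (hsub n h)) hwl
            (InvE_insert (InvE_mono (fun n => List.mem_append_left _) hinv) ?_)
            hd3 hf3 hg3
            ((rfl : ((true, maxI L + 1) : Label).1 = true).trans ((hp3 : v3.1 = true)).symm)
            ((rfl : ((true, maxI L + 2) : Label).1 = true).trans ((hq3 : u3.1 = true)).symm)
            (by simp) (by simp) ih3
          rw [hup]
          exact ⟨(true, maxI L + 1), (true, maxI L + 2), by simp, by simp,
            Or.inr (Or.inr ⟨rfl, rfl⟩)⟩
    · have hun : a0.1 = false := by simpa using hup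
      exact close_mismatch F ((hpol w).trans hpw) hun hmw hum
  | impN l E w v u φ ψ hnw hmem hE hpv hnu hvu hfv hfu _ ih =>
    intro σ L F hpol hsub hwl hinv
    have hmw : Node.lf (σ w) (SCIForm.imp φ ψ) ∈ L := hsub _ hmem
    obtain ⟨a0, ha0⟩ := urfather_exists hmw
    have hum : Node.lf a0 (SCIForm.imp φ ψ) ∈ L := urfather_mem ha0
    by_cases hup : a0.1 = true
    · exact close_mismatch F hup ((hpol w).trans hnw) hum hmw
    · have hun : a0.1 = false := by simpa using hup
      by_cases hin : (a0, SCIForm.imp φ ψ) ∈ F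
      · have hd0 : DecDone a0.1 (SCIForm.imp φ ψ) L := hinv _ hin
        rw [hun] at hd0
        have hd : ∃ a b : Label, posL a ∧ negL b ∧ Node.lf a φ ∈ L ∧ Node.lf b ψ ∈ L := hd0
        obtain ⟨a, b, hpa, hnb, hma, hmb⟩ := hd
        exact reuse2 hpol hsub hwl hinv hvu hfv hfu
          ((hpa : a.1 = true).trans ((hpv : v.1 = true)).symm)
          ((hnb : b.1 = false).trans ((hnu : u.1 = false)).symm) hma hmb ih
      · refine ClosedTabUB.impN L F a0 (true, maxI L + 1) (false, maxI L + 2) φ ψ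
          hun hum hin ha0 rfl rfl (ne12 _ _ _)
          (freshL_of_gt true L (by omega)) (freshL_of_gt false L (by omega)) ?_
        refine reuse2 hpol (fun n h => List.mem_append_left _ (hsub n h)) hwl
          (InvE_insert (InvE_mono (fun n => List.mem_append_left _) hinv) ?_)
          hvu hfv hfu
          ((rfl : ((true, maxI L + 1) : Label).1 = true).trans ((hpv : v.1 = true)).symm)
          ((rfl : ((false, maxI L + 2) : Label).1 = false).trans ((hnu : u.1 = false)).symm)
          (by simp) (by simp) ih
        rw [hun]
        exact ⟨(true, maxI L + 1), (false, maxI L + 2), rfl, rfl, by simp, by simp⟩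
  | idnP l E w φ ψ v1 u1 v2 u2 hpw hmem hE hp1 hq1 hd1 hf1 hg1 hn2 hm2 hd2 hf2 hg2
      _ _ ih1 ih2 =>
    intro σ L F hpol hsub hwl hinv
    have hmw : Node.lf (σ w) (SCIForm.idn φ ψ) ∈ L := hsub _ hmem
    obtain ⟨a0, ha0⟩ := urfather_exists hmw
    have hum : Node.lf a0 (SCIForm.idn φ ψ) ∈ L := urfather_mem ha0
    by_cases hup : a0.1 = true
    · by_cases hin : (a0, SCIForm.idn φ ψ) ∈ F
      · have hd0 : DecDone a0.1 (SCIForm.idn φ ψ) L := hinv _ hin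
        rw [hup] at hd0
        have hd : ∃ a b : Label, Node.lf a φ ∈ L ∧ Node.lf b ψ ∈ L ∧ Node.eq a b ∈ L ∧
            ((posL a ∧ posL b) ∨ (negL a ∧ negL b)) := hd0
        obtain ⟨a, b, hma, hmb, hme, hc⟩ := hd
        rcases hc with ⟨hca, hcb⟩ | ⟨hca, hcb⟩
        · exact reuse2eq hpol hsub hwl hinv hd1 hf1 hg1
            ((hca : a.1 = true).trans ((hp1 : v1.1 = true)).symm)
            ((hcb : b.1 = true).trans ((hq1 : u1.1 = true)).symm) hma hmb hme ih1
        · exact reuse2eq hpol hsub hwl hinv hd2 hf2 hg2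
            ((hca : a.1 = false).trans ((hn2 : v2.1 = false)).symm)
            ((hcb : b.1 = false).trans ((hm2 : u2.1 = false)).symm) hma hmb hme ih2
      · refine ClosedTabUB.idnP L F a0 φ ψ (true, maxI L + 1) (true, maxI L + 2)
          (false, maxI L + 1) (false, maxI L + 2)
          hup hum hin ha0
          rfl rfl (ne12 _ _ _) (freshL_of_gt true L (by omega)) (freshL_of_gt true L (by omega))
          rfl rfl (ne12 _ _ _) (freshL_of_gt false L (by omega)) (freshL_of_gt false L (by omega))
          ?_ ?_
        · refine reuse2eq hpol (fun n h => List.mem_append_left _ (hsub n h)) hwl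
            (InvE_insert (InvE_mono (fun n => List.mem_append_left _) hinv) ?_)
            hd1 hf1 hg1
            ((rfl : ((true, maxI L + 1) : Label).1 = true).trans ((hp1 : v1.1 = true)).symm)
            ((rfl : ((true, maxI L + 2) : Label).1 = true).trans ((hq1 : u1.1 = true)).symm)
            (by simp) (by simp) (by simp) ih1
          rw [hup]
          exact ⟨(true, maxI L + 1), (true, maxI L + 2), by simp, by simp, by simp,
            Or.inl ⟨rfl, rfl⟩⟩
        · refine reuse2eq hpol (fun n h => List.mem_append_left _ (hsub n h)) hwl
            (InvE_insert (InvE_mono (fun n => List.mem_append_left _) hinv) ?_)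
            hd2 hf2 hg2
            ((rfl : ((false, maxI L + 1) : Label).1 = false).trans ((hn2 : v2.1 = false)).symm)
            ((rfl : ((false, maxI L + 2) : Label).1 = false).trans ((hm2 : u2.1 = false)).symm)
            (by simp) (by simp) (by simp) ih2
          rw [hup]
          exact ⟨(false, maxI L + 1), (false, maxI L + 2), by simp, by simp, by simp,
            Or.inr ⟨rfl, rfl⟩⟩
    · have hun : a0.1 = false := by simpa using hup
      exact close_mismatch F ((hpol w).trans hpw) hun hmw hum
  | idnN l E w φ ψ v1 u1 v2 u2 v3 u3 v4 u4 hnw hmem hE hp1 hq1 hd1 hf1 hg1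
      hp2 hn2 hd2 hf2 hg2 hn3 hp3' hd3 hf3 hg3 hn4 hm4 hd4 hf4 hg4
      _ _ _ _ ih1 ih2 ih3 ih4 =>
    intro σ L F hpol hsub hwl hinv
    have hmw : Node.lf (σ w) (SCIForm.idn φ ψ) ∈ L := hsub _ hmem
    obtain ⟨a0, ha0⟩ := urfather_exists hmw
    have hum : Node.lf a0 (SCIForm.idn φ ψ) ∈ L := urfather_mem ha0
    by_cases hup : a0.1 = true
    · exact close_mismatch F hup ((hpol w).trans hnw) hum hmw
    · have hun : a0.1 = false := by simpa using hup
      by_cases hin : (a0, SCIForm.idn φ ψ) ∈ F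
      · have hd0 : DecDone a0.1 (SCIForm.idn φ ψ) L := hinv _ hin
        rw [hun] at hd0
        have hd : ∃ a b : Label, Node.lf a φ ∈ L ∧ Node.lf b ψ ∈ L ∧
            ((posL a ∧ posL b ∧ Node.neq a b ∈ L) ∨ (posL a ∧ negL b) ∨
             (negL a ∧ posL b) ∨ (negL a ∧ negL b ∧ Node.neq a b ∈ L)) := hd0
        obtain ⟨a, b, hma, hmb, hc⟩ := hd
        rcases hc with ⟨hca, hcb, hme⟩ | ⟨hca, hcb⟩ | ⟨hca, hcb⟩ | ⟨hca, hcb, hme⟩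
        · exact reuse2neq hpol hsub hwl hinv hd1 hf1 hg1
            ((hca : a.1 = true).trans ((hp1 : v1.1 = true)).symm)
            ((hcb : b.1 = true).trans ((hq1 : u1.1 = true)).symm) hma hmb hme ih1
        · exact reuse2 hpol hsub hwl hinv hd2 hf2 hg2
            ((hca : a.1 = true).trans ((hp2 : v2.1 = true)).symm)
            ((hcb : b.1 = false).trans ((hn2 : u2.1 = false)).symm) hma hmb ih2
        · exact reuse2 hpol hsub hwl hinv hd3 hf3 hg3
            ((hca : a.1 = false).trans ((hn3 : v3.1 = false)).symm)
            ((hcb : b.1 = true).trans ((hp3' : u3.1 = true)).symm) hma hmb ih3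
        · exact reuse2neq hpol hsub hwl hinv hd4 hf4 hg4
            ((hca : a.1 = false).trans ((hn4 : v4.1 = false)).symm)
            ((hcb : b.1 = false).trans ((hm4 : u4.1 = false)).symm) hma hmb hme ih4
      · refine ClosedTabUB.idnN L F a0 φ ψ (true, maxI L + 1) (true, maxI L + 2)
          (true, maxI L + 1) (false, maxI L + 2) (false, maxI L + 1) (true, maxI L + 2)
          (false, maxI L + 1) (false, maxI L + 2)
          hun hum hin ha0
          rfl rfl (ne12 _ _ _) (freshL_of_gt true L (by omega)) (freshL_of_gt true L (by omega))
          rfl rfl (ne12 _ _ _) (freshL_of_gt true L (by omega)) (freshL_of_gt false L (by omega))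
          rfl rfl (ne12 _ _ _) (freshL_of_gt false L (by omega)) (freshL_of_gt true L (by omega))
          rfl rfl (ne12 _ _ _) (freshL_of_gt false L (by omega)) (freshL_of_gt false L (by omega))
          ?_ ?_ ?_ ?_
        · refine reuse2neq hpol (fun n h => List.mem_append_left _ (hsub n h)) hwl
            (InvE_insert (InvE_mono (fun n => List.mem_append_left _) hinv) ?_)
            hd1 hf1 hg1
            ((rfl : ((true, maxI L + 1) : Label).1 = true).trans ((hp1 : v1.1 = true)).symm)
            ((rfl : ((true, maxI L + 2) : Label).1 = true).trans ((hq1 : u1.1 = true)).symm)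
            (by simp) (by simp) (by simp) ih1
          rw [hun]
          exact ⟨(true, maxI L + 1), (true, maxI L + 2), by simp, by simp,
            Or.inl ⟨rfl, rfl, by simp⟩⟩
        · refine reuse2 hpol (fun n h => List.mem_append_left _ (hsub n h)) hwl
            (InvE_insert (InvE_mono (fun n => List.mem_append_left _) hinv) ?_)
            hd2 hf2 hg2
            ((rfl : ((true, maxI L + 1) : Label).1 = true).trans ((hp2 : v2.1 = true)).symm)
            ((rfl : ((false, maxI L + 2) : Label).1 = false).trans ((hn2 : u2.1 = false)).symm)
            (by simp) (by simp) ih2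
          rw [hun]
          exact ⟨(true, maxI L + 1), (false, maxI L + 2), by simp, by simp,
            Or.inr (Or.inl ⟨rfl, rfl⟩)⟩
        · refine reuse2 hpol (fun n h => List.mem_append_left _ (hsub n h)) hwl
            (InvE_insert (InvE_mono (fun n => List.mem_append_left _) hinv) ?_)
            hd3 hf3 hg3
            ((rfl : ((false, maxI L + 1) : Label).1 = false).trans ((hn3 : v3.1 = false)).symm)
            ((rfl : ((true, maxI L + 2) : Label).1 = true).trans ((hp3' : u3.1 = true)).symm)
            (by simp) (by simp) ih3
          rw [hun]
          exact ⟨(false, maxI L + 1), (true, maxI L + 2), by simp, by simp,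
            Or.inr (Or.inr (Or.inl ⟨rfl, rfl⟩))⟩
        · refine reuse2neq hpol (fun n h => List.mem_append_left _ (hsub n h)) hwl
            (InvE_insert (InvE_mono (fun n => List.mem_append_left _) hinv) ?_)
            hd4 hf4 hg4
            ((rfl : ((false, maxI L + 1) : Label).1 = false).trans ((hn4 : v4.1 = false)).symm)
            ((rfl : ((false, maxI L + 2) : Label).1 = false).trans ((hm4 : u4.1 = false)).symm)
            (by simp) (by simp) (by simp) ih4
          rw [hun]
          exact ⟨(false, maxI L + 1), (false, maxI L + 2), by simp, by simp,
            Or.inr (Or.inr (Or.inr ⟨rfl, rfl, by simp⟩))⟩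
  | eqNeg l E w v u y φ ψ h1 h2 h3 h4 h5 h6 _ ih =>
    intro σ L F hpol hsub hwl hinv
    exact eq_case hpol hsub hwl hinv ⟨_, h4⟩ ⟨_, h5⟩
      (fun hnot hc => ClosedTabUB.eqNeg L F (σ w) (σ v) (σ u) (σ y) φ ψ
        (hsub _ h1) (hsub _ h2) (hsub _ h3) (hsub _ h4) (hsub _ h5) hnot hc) ih
  | eqImp l E w v w' v' x z φ ψ χ θ h1 h2 h3 h4 h5 h6 h7 h8 h9 _ ih =>
    intro σ L F hpol hsub hwl hinv
    exact eq_case hpol hsub hwl hinv ⟨_, h7⟩ ⟨_, h8⟩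
      (fun hnot hc => ClosedTabUB.eqImp L F (σ w) (σ v) (σ w') (σ v') (σ x) (σ z) φ ψ χ θ
        (hsub _ h1) (hsub _ h2) (hsub _ h3) (hsub _ h4) (hsub _ h5) (hsub _ h6)
        (hsub _ h7) (hsub _ h8) hnot hc) ih
  | eqIdn l E w v w' v' x z φ ψ χ θ h1 h2 h3 h4 h5 h6 h7 h8 h9 _ ih =>
    intro σ L F hpol hsub hwl hinv
    exact eq_case hpol hsub hwl hinv ⟨_, h7⟩ ⟨_, h8⟩
      (fun hnot hc => ClosedTabUB.eqIdn L F (σ w) (σ v) (σ w') (σ v') (σ x) (σ z) φ ψ χ θ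
        (hsub _ h1) (hsub _ h2) (hsub _ h3) (hsub _ h4) (hsub _ h5) (hsub _ h6)
        (hsub _ h7) (hsub _ h8) hnot hc) ih
  | ruleF l E w v φ h1 h2 h3 _ ih =>
    intro σ L F hpol hsub hwl hinv
    exact eq_case hpol hsub hwl hinv ⟨_, h1⟩ ⟨_, h2⟩
      (fun hnot hc => ClosedTabUB.ruleF L F (σ w) (σ v) φ (hsub _ h1) (hsub _ h2) hnot hc) ih
  | ruleSym l E w v h1 h2 _ ih =>
    intro σ L F hpol hsub hwl hinv
    obtain ⟨hww, hvv⟩ := hwl w v (Or.inl h1)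
    exact eq_case hpol hsub hwl hinv hvv hww
      (fun hnot hc => ClosedTabUB.ruleSym L F (σ w) (σ v) (hsub _ h1) hnot hc) ih
  | ruleTran l E w v u h1 h2 h3 _ ih =>
    intro σ L F hpol hsub hwl hinv
    obtain ⟨hww, hvv⟩ := hwl w v (Or.inl h1)
    obtain ⟨_, huu⟩ := hwl v u (Or.inl h2)
    exact eq_case hpol hsub hwl hinv hww huu
      (fun hnot hc => ClosedTabUB.ruleTran L F (σ w) (σ v) (σ u) (hsub _ h1) (hsub _ h2)
        hnot hc) ih

/-- if an SCI-formula φ has a TC_SCI-tableau proof (a closed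
TC_SCI-tableau with w⁻ : φ at the root), then φ has a TC_SCI+(UB)-tableau
proof, i.e., a closed tableau in the system with urfather blocking. -/
theorem stmt_16 (φ : SCIForm) (w : Label) (hw : negL w)
    (hproof : ClosedTab [Node.lf w φ] ∅) :
    ClosedTabUB [Node.lf w φ] ∅ := by
  refine keyUB hproof id [Node.lf w φ] ∅ (fun x => rfl) ?_ ?_ ?_
  · intro n hn; rw [mapN_id]; exact hn
  · intro a b h; rcases h with h | h <;> simp at h
  · intro p hp; simp at hp
end

section
/- The system TC_SCI+(UB) is sound, complete, and terminating: (i) if an SCI-formula φ is SCI-satisfiable then there is an open fully expanded TC_SCI+(UB)-tableau with w⁺ : φ at the root; (ii) if φ is SCI-valid then φ has a TC_SCI+(UB)-tableau proof; (iii) for every φ, on any branch of a TC_SCI+(UB)-tableau for φ, rules are applied at most |φ| + |φ|² + 1 times, where |φ| is the number of occurrences of subformulas of φ. -/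
namespace SCIForm

def occurrences : SCIForm → List SCIForm
  | atom n => [atom n]
  | not ψ => not ψ :: ψ.occurrences
  | imp ψ χ => imp ψ χ :: (ψ.occurrences ++ χ.occurrences)
  | idn ψ χ => idn ψ χ :: (ψ.occurrences ++ χ.occurrences)

def arity : SCIForm → ℕ
  | atom _ => 0
  | not _ => 1
  | imp _ _ => 2
  | idn _ _ => 2

def subformulas (φ : SCIForm) : Finset SCIForm := φ.occurrences.toFinset

lemma length_occurrences (φ : SCIForm) : φ.occurrences.length = φ.size := by
  induction φ <;> simp_all [occurrences, size]

lemma sum_arity_occurrences (φ : SCIForm) : (φ.occurrences.map arity).sum + 1 = φ.size := by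
  induction φ <;> simp_all [occurrences, size, arity] <;> omega

@[simp] lemma self_mem_occurrences (φ : SCIForm) : φ ∈ φ.occurrences := by
  cases φ <;> simp [occurrences]

lemma self_mem_subformulas (φ : SCIForm) : φ ∈ φ.subformulas :=
  List.mem_toFinset.2 φ.self_mem_occurrences

lemma occurrences_subset {ψ φ : SCIForm} (h : ψ ∈ φ.occurrences) :
    ψ.occurrences ⊆ φ.occurrences := by
  induction φ with
  | atom n => simp_all [occurrences]
  | not χ ih =>
    rcases List.mem_cons.1 h with rfl | h
    · exact List.Subset.refl _
    · exact List.Subset.trans (ih h) (List.subset_cons_self _ _)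
  | imp χ θ ih₁ ih₂ | idn χ θ ih₁ ih₂ =>
    rcases List.mem_cons.1 h with rfl | h
    · exact List.Subset.refl _
    rcases List.mem_append.1 h with h | h
    · exact List.Subset.trans (ih₁ h) fun _ hx => by simp [occurrences, hx]
    · exact List.Subset.trans (ih₂ h) fun _ hx => by simp [occurrences, hx]

lemma subformulas_subset {ψ φ : SCIForm} (h : ψ ∈ φ.subformulas) :
    ψ.subformulas ⊆ φ.subformulas := by
  intro χ hχ
  simp only [subformulas, List.mem_toFinset] at h hχ ⊢
  exact occurrences_subset h hχ

lemma card_subformulas_le (φ : SCIForm) : φ.subformulas.card ≤ φ.size :=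
  φ.length_occurrences ▸ List.toFinset_card_le _

lemma sum_arity_subformulas_lt (φ : SCIForm) : ∑ ψ ∈ φ.subformulas, ψ.arity < φ.size := by
  classical
  have hcount : ∑ ψ ∈ φ.subformulas, ψ.arity ≤ (φ.occurrences.map arity).sum := by
    rw [Finset.sum_list_map_count]
    refine Finset.sum_le_sum fun ψ hψ => Nat.le_mul_of_pos_left _ ?_
    exact List.count_pos_iff.2 (List.mem_toFinset.1 hψ)
  have := φ.sum_arity_occurrences
  omega

end SCIForm

def labels (l : List Node) : List Label :=
  l.filterMap fun
    | Node.lf w _ => some w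
    | _ => none

def eqPairs (l : List Node) : List (Label × Label) :=
  l.filterMap fun
    | Node.eq w v => some (w, v)
    | _ => none

@[simp] lemma labels_nil : labels [] = [] := rfl

@[simp] lemma labels_cons_lf (w : Label) (ψ : SCIForm) (l : List Node) :
    labels (Node.lf w ψ :: l) = w :: labels l := rfl

@[simp] lemma labels_cons_eq (w v : Label) (l : List Node) :
    labels (Node.eq w v :: l) = labels l := rfl

@[simp] lemma labels_cons_bot (l : List Node) : labels (Node.bot :: l) = labels l := rfl

@[simp] lemma labels_append (l t : List Node) : labels (l ++ t) = labels l ++ labels t :=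
  List.filterMap_append ..

@[simp] lemma eqPairs_append (l t : List Node) : eqPairs (l ++ t) = eqPairs l ++ eqPairs t :=
  List.filterMap_append ..

lemma mem_labels {w : Label} {l : List Node} : w ∈ labels l ↔ ∃ ψ, Node.lf w ψ ∈ l := by
  simp only [labels, List.mem_filterMap]
  constructor
  · rintro ⟨n, hn, he⟩
    cases n <;> simp only [Option.some.injEq, reduceCtorEq] at he
    exact ⟨_, he ▸ hn⟩
  · rintro ⟨ψ, hψ⟩
    exact ⟨_, hψ, rfl⟩

lemma mem_eqPairs {w v : Label} {l : List Node} : (w, v) ∈ eqPairs l ↔ Node.eq w v ∈ l := by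
  simp only [eqPairs, List.mem_filterMap]
  constructor
  · rintro ⟨n, hn, he⟩
    cases n <;> simp_all
  · exact fun h => ⟨_, h, rfl⟩

lemma freshL_iff_notMem_labels {v : Label} {l : List Node} : freshL v l ↔ v ∉ labels l := by
  simp [freshL, mem_labels]

lemma IsUrfather.mem {w : Label} {ψ : SCIForm} {l : List Node} (h : IsUrfather w ψ l) :
    Node.lf w ψ ∈ l :=
  List.mem_of_find?_eq_some h

lemma IsUrfather.append {w : Label} {ψ : SCIForm} {l : List Node} (t : List Node)
    (h : IsUrfather w ψ l) : IsUrfather w ψ (l ++ t) := by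
  unfold IsUrfather at *
  rw [List.find?_append, h]
  rfl

lemma IsUrfather.unique {w w' : Label} {ψ : SCIForm} {l : List Node}
    (h : IsUrfather w ψ l) (h' : IsUrfather w' ψ l) : w = w' := by
  unfold IsUrfather at h h'
  simpa [h] using h'

lemma exists_isUrfather {w : Label} {ψ : SCIForm} {l : List Node} (h : Node.lf w ψ ∈ l) :
    ∃ u, IsUrfather u ψ l := by
  obtain ⟨n, hn⟩ : ∃ n, l.find? (isLFof ψ) = some n :=
    Option.isSome_iff_exists.1 (List.find?_isSome.2 ⟨_, h, by simp [isLFof]⟩)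
  have hψ := List.find?_some hn
  cases n with
  | lf u θ =>
    obtain rfl : θ = ψ := by simpa [isLFof] using hψ
    exact ⟨u, hn⟩
  | _ => simp [isLFof] at hψ

def freshLabel (l : List Node) (b : Bool) (i : ℕ) : Label :=
  (b, ((labels l).map Prod.snd).sum + 1 + i)

lemma freshL_freshLabel (l : List Node) (b : Bool) (i : ℕ) : freshL (freshLabel l b i) l := by
  rw [freshL_iff_notMem_labels]
  intro h
  have := List.le_sum_of_mem (List.mem_map_of_mem (f := Prod.snd) h)
  simp only [freshLabel] at this
  omega

lemma freshLabel_ne (l : List Node) {b b' : Bool} {i j : ℕ} (h : i ≠ j) :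
    freshLabel l b i ≠ freshLabel l b' j := by
  simp [freshLabel, h]

/-- The conclusion of a decomposition rule for `u : ψ` lies on `l`; the branch taken is recorded
by the polarities of the new labels. -/
def Decomposed (u : Label) (ψ : SCIForm) (l : List Node) : Prop :=
  match ψ with
  | .atom _ => True
  | .not χ => ∃ v, Node.lf v χ ∈ l ∧ v.1 = !u.1
  | .imp χ θ => ∃ v x, Node.lf v χ ∈ l ∧ Node.lf x θ ∈ l ∧ u.1 = (!v.1 || x.1)
  | .idn χ θ => ∃ v x, Node.lf v χ ∈ l ∧ Node.lf x θ ∈ l ∧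
      if u.1 then Node.eq v x ∈ l else Node.neq v x ∈ l ∨ v.1 ≠ x.1

lemma Decomposed.append {u : Label} {ψ : SCIForm} {l : List Node} (t : List Node)
    (h : Decomposed u ψ l) : Decomposed u ψ (l ++ t) := by
  have hl : ∀ n, n ∈ l → n ∈ l ++ t := fun _ => List.mem_append_left t
  cases ψ with
  | atom n => trivial
  | not χ => exact h.imp fun v ⟨hv, hp⟩ => ⟨hl _ hv, hp⟩
  | imp χ θ => exact h.imp fun v => .imp fun x ⟨hv, hx, hp⟩ => ⟨hl _ hv, hl _ hx, hp⟩
  | idn χ θ =>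
    refine h.imp fun v => .imp fun x ⟨hv, hx, hp⟩ => ⟨hl _ hv, hl _ hx, ?_⟩
    split_ifs at hp ⊢
    · exact hl _ hp
    · exact hp.imp_left (hl _)

lemma Decomposed.of_fst_eq {u u' : Label} {ψ : SCIForm} {l : List Node} (h : Decomposed u ψ l)
    (hu : u.1 = u'.1) : Decomposed u' ψ l := by
  cases ψ with
  | atom => trivial
  | _ => simpa only [Decomposed, ← hu] using h

inductive StepShape (l : List Node) (E : Set (Label × SCIForm)) :
    List Node → Set (Label × SCIForm) → Prop
  | decompose (w : Label) (ψ : SCIForm) (t : List Node) :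
      Node.lf w ψ ∈ l → (w, ψ) ∉ E → IsUrfather w ψ l →
      (labels t).length = ψ.arity → (∀ v χ, Node.lf v χ ∈ t → χ ∈ ψ.subformulas) →
      (∀ a b, Node.eq a b ∈ t → a ∈ labels t ∧ b ∈ labels t) →
      Decomposed w ψ (l ++ t) → StepShape l E (l ++ t) (insert (w, ψ) E)
  | addEq (a b : Label) : a ∈ labels l → b ∈ labels l → Node.eq a b ∉ l →
      StepShape l E (l ++ [Node.eq a b]) E
  | close : Node.bot ∉ l → StepShape l E (l ++ [Node.bot]) E

lemma ExtendUB.shape {l l' : List Node} {E E' : Set (Label × SCIForm)}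
    (h : ExtendUB l E l' E')
    (hl : ∀ a b, Node.eq a b ∈ l → a ∈ labels l ∧ b ∈ labels l) :
    StepShape l E l' E' := by
  have lf_mem {w ψ} (h : Node.lf w ψ ∈ l) : w ∈ labels l := mem_labels.2 ⟨_, h⟩
  cases h with
  | eqNeg _ _ _ _ _ _ _ _ _ _ hu hy hnew | eqImp _ _ _ _ _ _ _ _ _ _ _ _ _ _ _ _ _ hu hy hnew
  | eqIdn _ _ _ _ _ _ _ _ _ _ _ _ _ _ _ _ _ hu hy hnew | ruleF _ _ _ _ hu hy hnew =>
    exact .addEq _ _ (lf_mem hu) (lf_mem hy) hnew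
  | ruleSym _ _ _ h hnew => exact .addEq _ _ (hl _ _ h).2 (hl _ _ h).1 hnew
  | ruleTran _ _ _ _ h h' hnew => exact .addEq _ _ (hl _ _ h).1 (hl _ _ h').2 hnew
  | bot1 _ _ hb | bot2 _ _ hb => exact .close hb
  | negP _ v _ _ _ hmem hE hurf | negN _ v _ _ _ hmem hE hurf =>
    refine .decompose _ _ _ hmem hE hurf rfl ?_ (by simp) ⟨v, by simp, ?_⟩
    · simp [SCIForm.subformulas, SCIForm.occurrences]
    · simp_all [posL, negL]
  | impP1 _ v u _ _ _ _ hmem hE hurf | impP2 _ v u _ _ _ _ hmem hE hurf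
  | impP3 _ v u _ _ _ _ hmem hE hurf | impN _ v u _ _ _ _ hmem hE hurf
  | idnP1 _ v u _ _ _ _ hmem hE hurf | idnP2 _ v u _ _ _ _ hmem hE hurf
  | idnN1 _ v u _ _ _ _ hmem hE hurf | idnN2 _ v u _ _ _ _ hmem hE hurf
  | idnN3 _ v u _ _ _ _ hmem hE hurf | idnN4 _ v u _ _ _ _ hmem hE hurf =>
    refine .decompose _ _ _ hmem hE hurf rfl ?_ (by simp) ⟨v, u, by simp, by simp, ?_⟩
    · rintro _ _ h
      simp only [List.mem_cons, Node.lf.injEq, reduceCtorEq, List.not_mem_nil, or_false] at h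
      rcases h with ⟨-, rfl⟩ | ⟨-, rfl⟩ <;> simp [SCIForm.subformulas, SCIForm.occurrences]
    · simp_all [posL, negL]

open Classical in
noncomputable def decomposedFormulas (φ : SCIForm) (E : Set (Label × SCIForm)) :
    Finset SCIForm :=
  φ.subformulas.filter fun ψ => ∃ w, (w, ψ) ∈ E

lemma decomposedFormulas_subset (φ : SCIForm) (E : Set (Label × SCIForm)) :
    decomposedFormulas φ E ⊆ φ.subformulas := by
  classical
  exact Finset.filter_subset _ _

structure BranchInv (φ : SCIForm) (l : List Node) (E : Set (Label × SCIForm)) : Prop where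
  isUrfather : ∀ w ψ, (w, ψ) ∈ E → IsUrfather w ψ l
  decomposed : ∀ w ψ, (w, ψ) ∈ E → Decomposed w ψ l
  mem_subformulas : ∀ w ψ, Node.lf w ψ ∈ l → ψ ∈ φ.subformulas
  labels_of_eq : ∀ a b, Node.eq a b ∈ l → a ∈ labels l ∧ b ∈ labels l
  length_labels_le : (labels l).length ≤ 1 + ∑ ψ ∈ decomposedFormulas φ E, ψ.arity

section Invariant

variable {φ : SCIForm} {l l' : List Node} {E E' : Set (Label × SCIForm)}

lemma BranchInv.root (φ : SCIForm) (w : Label) : BranchInv φ [Node.lf w φ] ∅ where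
  isUrfather := by simp
  decomposed := by simp
  mem_subformulas := by
    simp only [List.mem_singleton, Node.lf.injEq, and_imp]
    rintro _ _ - rfl
    exact SCIForm.self_mem_subformulas _
  labels_of_eq := by simp
  length_labels_le := by simp

lemma decomposedFormulas_insert {w : Label} {ψ : SCIForm} (hψ : ψ ∈ φ.subformulas) :
    decomposedFormulas φ (insert (w, ψ) E) = insert ψ (decomposedFormulas φ E) := by
  ext χ
  simp only [decomposedFormulas, Finset.mem_filter, Finset.mem_insert, Set.mem_insert_iff,
    Prod.mk.injEq]
  constructor
  · rintro ⟨hχ, w', ⟨-, rfl⟩ | h⟩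
    · exact .inl rfl
    · exact .inr ⟨hχ, w', h⟩
  · rintro (rfl | ⟨hχ, w', h⟩)
    · exact ⟨hψ, w, .inl ⟨rfl, rfl⟩⟩
    · exact ⟨hχ, w', .inr h⟩

/-- This is where (UB) enters: only urfathers are decomposed, so no formula is decomposed twice. -/
lemma BranchInv.notMem_decomposedFormulas (hI : BranchInv φ l E) {w : Label} {ψ : SCIForm}
    (hE : (w, ψ) ∉ E) (hurf : IsUrfather w ψ l) : ψ ∉ decomposedFormulas φ E := by
  simp only [decomposedFormulas, Finset.mem_filter, not_and, not_exists]
  intro _ w' hw'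
  exact hE (hurf.unique (hI.isUrfather w' ψ hw') ▸ hw')

lemma BranchInv.step (hI : BranchInv φ l E) (h : ExtendUB l E l' E') : BranchInv φ l' E' := by
  rcases h.shape hI.labels_of_eq with ⟨w, ψ, t, hmem, hE, hurf, hlen, hsub, heq, hdec⟩ |
    ⟨a, b, ha, hb, -⟩ | -
  · have hψ := hI.mem_subformulas _ _ hmem
    refine ⟨?_, ?_, ?_, ?_, ?_⟩
    · simp only [Set.mem_insert_iff, Prod.mk.injEq]
      rintro _ _ (⟨rfl, rfl⟩ | h)
      exacts [hurf.append t, (hI.isUrfather _ _ h).append t]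
    · simp only [Set.mem_insert_iff, Prod.mk.injEq]
      rintro _ _ (⟨rfl, rfl⟩ | h)
      exacts [hdec, (hI.decomposed _ _ h).append t]
    · intro v χ h
      rcases List.mem_append.1 h with h | h
      exacts [hI.mem_subformulas v χ h, SCIForm.subformulas_subset hψ (hsub v χ h)]
    · intro a b h
      rcases List.mem_append.1 h with h | h
      · simpa using (hI.labels_of_eq a b h).imp .inl .inl
      · simpa using (heq a b h).imp .inr .inr
    · rw [decomposedFormulas_insert hψ, Finset.sum_insert (hI.notMem_decomposedFormulas hE hurf),
        labels_append, List.length_append, hlen]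
      have := hI.length_labels_le
      omega
  · refine ⟨fun w ψ h => (hI.isUrfather w ψ h).append _,
      fun w ψ h => (hI.decomposed w ψ h).append _, ?_, ?_, by simpa using hI.length_labels_le⟩
    · simpa using hI.mem_subformulas
    · simp only [List.mem_append, List.mem_singleton, Node.eq.injEq, labels_append]
      rintro _ _ (h | ⟨rfl, rfl⟩)
      · simpa using hI.labels_of_eq _ _ h
      · simp [ha, hb]
  · refine ⟨fun w ψ h => (hI.isUrfather w ψ h).append _,
      fun w ψ h => (hI.decomposed w ψ h).append _, ?_, ?_, by simpa using hI.length_labels_le⟩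
    · simpa using hI.mem_subformulas
    · intro a b h
      simpa using hI.labels_of_eq a b (by simpa using h)

end Invariant

noncomputable def stepMeasure (φ : SCIForm) (l : List Node) (E : Set (Label × SCIForm)) : ℕ :=
  (decomposedFormulas φ E).card + (eqPairs l).toFinset.card + if Node.bot ∈ l then 1 else 0

section Measure

variable {φ : SCIForm} {l l' : List Node} {E E' : Set (Label × SCIForm)}

lemma stepMeasure_root (φ : SCIForm) (w : Label) : stepMeasure φ [Node.lf w φ] ∅ = 0 := by
  simp [stepMeasure, decomposedFormulas, eqPairs]

lemma BranchInv.stepMeasure_lt (hI : BranchInv φ l E) (h : ExtendUB l E l' E') :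
    stepMeasure φ l E < stepMeasure φ l' E' := by
  have heqs (t : List Node) : (eqPairs l).toFinset.card ≤ (eqPairs (l ++ t)).toFinset.card :=
    Finset.card_le_card fun x hx => by simp_all
  have hclosed (t : List Node) :
      (if Node.bot ∈ l then 1 else 0) ≤ if Node.bot ∈ l ++ t then 1 else 0 := by
    split_ifs <;> simp_all
  rcases h.shape hI.labels_of_eq with
    ⟨w, ψ, t, hmem, hE, hurf, -⟩ | ⟨a, b, -, -, hnew⟩ | hb
  · have := Finset.card_insert_of_notMem (hI.notMem_decomposedFormulas hE hurf)
    rw [← decomposedFormulas_insert (w := w) (hI.mem_subformulas _ _ hmem)] at this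
    have := heqs t
    have := hclosed t
    simp only [stepMeasure]
    omega
  · have hins : (eqPairs (l ++ [Node.eq a b])).toFinset = insert (a, b) (eqPairs l).toFinset := by
      ext; simp [eqPairs]
    have := hins ▸ Finset.card_insert_of_notMem (s := (eqPairs l).toFinset) (a := (a, b))
      (by simpa [mem_eqPairs] using hnew)
    have := hclosed [Node.eq a b]
    simp only [stepMeasure]
    omega
  · have := heqs [Node.bot]
    simp only [stepMeasure, hb, if_false, List.mem_append, List.mem_singleton, or_true, if_true]
    omega

lemma BranchInv.length_labels_le_size (hI : BranchInv φ l E) : (labels l).length ≤ φ.size := by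
  have : ∑ ψ ∈ decomposedFormulas φ E, ψ.arity ≤ ∑ ψ ∈ φ.subformulas, ψ.arity :=
    Finset.sum_le_sum_of_subset (decomposedFormulas_subset φ E)
  have := hI.length_labels_le
  have := φ.sum_arity_subformulas_lt
  omega

lemma BranchInv.stepMeasure_le (hI : BranchInv φ l E) :
    stepMeasure φ l E ≤ φ.size + φ.size ^ 2 + 1 := by
  have hdec : (decomposedFormulas φ E).card ≤ φ.size :=
    (Finset.card_le_card (decomposedFormulas_subset φ E)).trans φ.card_subformulas_le
  have hlabels : (labels l).toFinset.card ≤ φ.size :=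
    (List.toFinset_card_le _).trans hI.length_labels_le_size
  have heqs : (eqPairs l).toFinset.card ≤ φ.size ^ 2 := by
    have hsub : (eqPairs l).toFinset ⊆ (labels l).toFinset ×ˢ (labels l).toFinset := by
      rintro ⟨a, b⟩ h
      simpa using hI.labels_of_eq a b (mem_eqPairs.1 (List.mem_toFinset.1 h))
    calc (eqPairs l).toFinset.card ≤ (labels l).toFinset.card * (labels l).toFinset.card := by
          simpa using Finset.card_le_card hsub
      _ ≤ φ.size ^ 2 := by rw [sq]; exact Nat.mul_le_mul hlabels hlabels
  have : (if Node.bot ∈ l then 1 else 0) ≤ 1 := by split <;> omega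
  simp only [stepMeasure]
  omega

end Measure

section Runs

variable {φ : SCIForm}

lemma BranchInv.of_run {w : Label} {n : ℕ} {g : ℕ → List Node}
    {h : ℕ → Set (Label × SCIForm)} (hg : g 0 = [Node.lf w φ]) (hh : h 0 = ∅)
    (hrun : ∀ i < n, ExtendUB (g i) (h i) (g (i + 1)) (h (i + 1))) :
    ∀ i ≤ n, BranchInv φ (g i) (h i) ∧ i ≤ stepMeasure φ (g i) (h i) := by
  intro i
  induction i with
  | zero => simp [hg, hh, BranchInv.root, stepMeasure_root]
  | succ i ih =>
    intro hi
    obtain ⟨hI, hle⟩ := ih (by omega)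
    have hstep := hrun i (by omega)
    exact ⟨hI.step hstep, by have := hI.stepMeasure_lt hstep; omega⟩

theorem run_length_le {w : Label} {n : ℕ} {g : ℕ → List Node}
    {h : ℕ → Set (Label × SCIForm)} (hg : g 0 = [Node.lf w φ]) (hh : h 0 = ∅)
    (hrun : ∀ i < n, ExtendUB (g i) (h i) (g (i + 1)) (h (i + 1))) :
    n ≤ φ.size + φ.size ^ 2 + 1 := by
  obtain ⟨hI, hle⟩ := BranchInv.of_run hg hh hrun n le_rfl
  exact hle.trans hI.stepMeasure_le

lemma ExtendUB.prefix {l l' : List Node} {E E' : Set (Label × SCIForm)}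
    (h : ExtendUB l E l' E') : l <+: l' := by
  cases h <;> exact List.prefix_append _ _

theorem exists_saturated_run (P : List Node → Set (Label × SCIForm) → Prop)
    (hP : ∀ l E l' E', P l E → ExtendUB l E l' E' →
      ∃ l'' E'', ExtendUB l E l'' E'' ∧ P l'' E'')
    (l : List Node) (E : Set (Label × SCIForm)) (hI : BranchInv φ l E) (hl : P l E) :
    ∃ (n : ℕ) (g : ℕ → List Node) (h : ℕ → Set (Label × SCIForm)),
      g 0 = l ∧ h 0 = E ∧ (∀ i < n, ExtendUB (g i) (h i) (g (i + 1)) (h (i + 1))) ∧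
      P (g n) (h n) ∧ BranchInv φ (g n) (h n) ∧ (∀ l' E', ¬ ExtendUB (g n) (h n) l' E') ∧
      l <+: g n := by
  obtain ⟨k, hk⟩ : ∃ k, φ.size + φ.size ^ 2 + 1 ≤ stepMeasure φ l E + k :=
    ⟨_, Nat.le_add_left _ _⟩
  induction k generalizing l E with
  | zero =>
    refine ⟨0, fun _ => l, fun _ => E, rfl, rfl, by simp, hl, hI, fun l' E' hstep => ?_,
      List.prefix_refl l⟩
    have := hI.stepMeasure_lt hstep
    have := (hI.step hstep).stepMeasure_le
    omega
  | succ k ih =>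
    by_cases hsat : ∀ l' E', ¬ ExtendUB l E l' E'
    · exact ⟨0, fun _ => l, fun _ => E, rfl, rfl, by simp, hl, hI, hsat, List.prefix_refl l⟩
    push Not at hsat
    obtain ⟨l₀, E₀, hstep₀⟩ := hsat
    obtain ⟨l₁, E₁, hstep, hl₁⟩ := hP l E l₀ E₀ hl hstep₀
    obtain ⟨n, g, h, hg, hh, hrun, hPn, hIn, hsatn, hpre⟩ :=
      ih l₁ E₁ (hI.step hstep) hl₁ (by have := hI.stepMeasure_lt hstep; omega)
    refine ⟨n + 1, fun | 0 => l | i + 1 => g i, fun | 0 => E | i + 1 => h i, rfl, rfl, ?_,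
      hPn, hIn, hsatn, hstep.prefix.trans hpre⟩
    rintro (_ | i) hi
    · simpa [hg, hh] using hstep
    · exact hrun i (by omega)

end Runs

def Node.Holds {U : Type} (M : SCIStruct U) (V : SCIForm → U) (ι : Label → U) : Node → Prop
  | .lf w ψ => ι w = V ψ ∧ (posL w ↔ V ψ ∈ M.D)
  | .eq w v => ι w = ι v
  | .neq w v => ι w ≠ ι v
  | .bot => False

def Node.relLabels : Node → List Label
  | .eq w v | .neq w v => [w, v]
  | _ => []

/-- Labels occurring in (in)equalities must carry formulas, so that a fresh label can be
re-assigned without harm. -/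
def IsRealization {U : Type} (M : SCIStruct U) (V : SCIForm → U) (ι : Label → U)
    (l : List Node) : Prop :=
  ∀ n ∈ l, n.Holds M V ι ∧ ∀ w ∈ n.relLabels, w ∈ labels l

def Realizable {U : Type} (M : SCIStruct U) (V : SCIForm → U) (l : List Node) : Prop :=
  ∃ ι, IsRealization M V ι l

section Soundness

variable {U : Type} {M : SCIStruct U} {V : SCIForm → U} {ι : Label → U} {l : List Node}
  {E : Set (Label × SCIForm)} {w : Label}

lemma IsValuation.neg_mem_iff (hV : IsValuation M V) (hM : IsSCIModel M) (χ : SCIForm) :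
    V (.not χ) ∈ M.D ↔ V χ ∉ M.D := by
  rw [hV.1]; exact hM.2.2.1 _

lemma IsValuation.imp_mem_iff (hV : IsValuation M V) (hM : IsSCIModel M) (χ θ : SCIForm) :
    V (.imp χ θ) ∈ M.D ↔ (V χ ∉ M.D ∨ V θ ∈ M.D) := by
  rw [hV.2.1]; exact hM.2.2.2.1 _ _

lemma IsValuation.idn_mem_iff (hV : IsValuation M V) (hM : IsSCIModel M) (χ θ : SCIForm) :
    V (.idn χ θ) ∈ M.D ↔ V χ = V θ := by
  rw [hV.2.2]; exact hM.2.2.2.2 _ _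

lemma IsRealization.value_eq (h : IsRealization M V ι l) {ψ : SCIForm}
    (hw : Node.lf w ψ ∈ l) : ι w = V ψ :=
  (h _ hw).1.1

lemma IsRealization.posL_iff (h : IsRealization M V ι l) {ψ : SCIForm}
    (hw : Node.lf w ψ ∈ l) : posL w ↔ V ψ ∈ M.D :=
  (h _ hw).1.2

lemma IsRealization.bot_notMem (h : IsRealization M V ι l) : Node.bot ∉ l :=
  fun hb => (h _ hb).1

lemma IsRealization.append (h : IsRealization M V ι l) {n : Node} (hn : n.Holds M V ι)
    (hlab : ∀ w ∈ n.relLabels, w ∈ labels l) : IsRealization M V ι (l ++ [n]) := by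
  intro m hm
  rcases List.mem_append.1 hm with hm | hm
  · exact ⟨(h m hm).1, fun w hw => by simp [(h m hm).2 w hw]⟩
  · obtain rfl := List.mem_singleton.1 hm
    exact ⟨hn, fun w hw => by simp [hlab w hw]⟩

lemma IsRealization.append_eq (h : IsRealization M V ι l) {a b : Label} {χ θ : SCIForm}
    (ha : Node.lf a χ ∈ l) (hb : Node.lf b θ ∈ l) (hV : V χ = V θ) :
    IsRealization M V ι (l ++ [Node.eq a b]) :=
  h.append (by simp [Node.Holds, h.value_eq ha, h.value_eq hb, hV])
    (by simp [Node.relLabels, mem_labels.2 ⟨_, ha⟩, mem_labels.2 ⟨_, hb⟩])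

lemma IsRealization.append_neq (h : IsRealization M V ι l) {a b : Label} {χ θ : SCIForm}
    (ha : Node.lf a χ ∈ l) (hb : Node.lf b θ ∈ l) (hV : V χ ≠ V θ) :
    IsRealization M V ι (l ++ [Node.neq a b]) :=
  h.append (by simp [Node.Holds, h.value_eq ha, h.value_eq hb, hV])
    (by simp [Node.relLabels, mem_labels.2 ⟨_, ha⟩, mem_labels.2 ⟨_, hb⟩])

lemma IsRealization.update (h : IsRealization M V ι l) {v : Label} (hv : freshL v l) (a : U) :
    IsRealization M V (Function.update ι v a) l := by
  have hne : ∀ w ∈ labels l, Function.update ι v a w = ι w := fun w hw =>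
    Function.update_of_ne (by rintro rfl; exact freshL_iff_notMem_labels.1 hv hw) _ _
  intro n hn
  obtain ⟨hholds, hlab⟩ := h n hn
  refine ⟨?_, hlab⟩
  cases n with
  | lf w ψ => simpa [Node.Holds, hne w (mem_labels.2 ⟨ψ, hn⟩)] using hholds
  | eq w u | neq w u =>
    simpa [Node.Holds, hne w (hlab w (by simp [Node.relLabels])),
      hne u (hlab u (by simp [Node.relLabels]))] using hholds
  | bot => exact hholds

lemma IsRealization.append_fresh (h : IsRealization M V ι l) {v : Label} {χ : SCIForm}
    (hv : freshL v l) (hpol : posL v ↔ V χ ∈ M.D) :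
    IsRealization M V (Function.update ι v (V χ)) (l ++ [Node.lf v χ]) :=
  (h.update hv _).append (by simp [Node.Holds, hpol]) (by simp [Node.relLabels])

lemma IsRealization.eq_of_eq (h : IsRealization M V ι l) {v : Label} {χ θ : SCIForm}
    (hw : Node.lf w χ ∈ l) (hv : Node.lf v θ ∈ l) (he : Node.eq w v ∈ l) : V χ = V θ := by
  rw [← h.value_eq hw, ← h.value_eq hv]
  exact (h _ he).1

lemma IsRealization.posL_iff_of_eq (h : IsRealization M V ι l) {v : Label}
    (he : Node.eq w v ∈ l) : posL w ↔ posL v := by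
  obtain ⟨χ, hw⟩ := mem_labels.1 ((h _ he).2 w (by simp [Node.relLabels]))
  obtain ⟨θ, hv⟩ := mem_labels.1 ((h _ he).2 v (by simp [Node.relLabels]))
  rw [h.posL_iff hw, h.posL_iff hv, h.eq_of_eq hw hv he]

lemma IsRealization.exists_fresh (h : IsRealization M V ι l) (χ : SCIForm) :
    ∃ v ι', (posL v ↔ V χ ∈ M.D) ∧ freshL v l ∧
      IsRealization M V ι' (l ++ [Node.lf v χ]) := by
  classical
  have hpol : posL (freshLabel l (decide (V χ ∈ M.D)) 0) ↔ V χ ∈ M.D := by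
    simp [posL, freshLabel]
  exact ⟨_, _, hpol, freshL_freshLabel _ _ _, h.append_fresh (freshL_freshLabel _ _ _) hpol⟩

lemma IsRealization.exists_fresh_pair (h : IsRealization M V ι l) (χ θ : SCIForm) :
    ∃ v u ι', (posL v ↔ V χ ∈ M.D) ∧ (posL u ↔ V θ ∈ M.D) ∧ v ≠ u ∧
      freshL v l ∧ freshL u l ∧ IsRealization M V ι' (l ++ [Node.lf v χ, Node.lf u θ]) := by
  obtain ⟨v, ι₁, hpv, hv, h₁⟩ := h.exists_fresh χ
  obtain ⟨u, ι₂, hpu, hu, h₂⟩ := h₁.exists_fresh θ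
  refine ⟨v, u, ι₂, hpv, hpu, ?_, hv, fun ψ hψ => hu ψ (List.mem_append_left _ hψ),
    by simpa using h₂⟩
  rintro rfl
  exact hu χ (by simp)

variable (hM : IsSCIModel M) (hV : IsValuation M V)
include hM hV

lemma IsRealization.exists_step_imp (h : IsRealization M V ι l) {χ θ : SCIForm}
    (hb : Node.bot ∉ l) (hmem : Node.lf w (.imp χ θ) ∈ l) (hE : (w, .imp χ θ) ∉ E)
    (hurf : IsUrfather w (.imp χ θ) l) :
    ∃ l' E', ExtendUB l E l' E' ∧ Realizable M V l' := by
  obtain ⟨v, u, ι', hpv, hpu, hvu, hv, hu, hR⟩ := h.exists_fresh_pair χ θ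
  have key : posL w ↔ (posL v → posL u) := by
    rw [h.posL_iff hmem, hV.imp_mem_iff hM, hpv, hpu]; tauto
  refine ⟨_, insert (w, .imp χ θ) E, ?_, ι', hR⟩
  cases hwb : w.1 <;> cases hvb : v.1 <;> cases hub : u.1 <;> simp [posL, hwb, hvb, hub] at key <;>
    first
    | exact .impP1 _ _ _ _ _ _ _ hb hwb hmem hE hurf hvb hub hvu hv hu
    | exact .impP2 _ _ _ _ _ _ _ hb hwb hmem hE hurf hvb hub hvu hv hu
    | exact .impP3 _ _ _ _ _ _ _ hb hwb hmem hE hurf hvb hub hvu hv hu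
    | exact .impN _ _ _ _ _ _ _ hb hwb hmem hE hurf hvb hub hvu hv hu

lemma IsRealization.exists_step_not (h : IsRealization M V ι l) {χ : SCIForm}
    (hb : Node.bot ∉ l) (hmem : Node.lf w (.not χ) ∈ l) (hE : (w, .not χ) ∉ E)
    (hurf : IsUrfather w (.not χ) l) :
    ∃ l' E', ExtendUB l E l' E' ∧ Realizable M V l' := by
  obtain ⟨v, ι', hpv, hv, hR⟩ := h.exists_fresh χ
  have key : posL w ↔ ¬ posL v := by rw [h.posL_iff hmem, hV.neg_mem_iff hM, hpv]
  refine ⟨_, insert (w, .not χ) E, ?_, ι', hR⟩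
  cases hwb : w.1 <;> cases hvb : v.1 <;> simp [posL, hwb, hvb] at key
  exacts [.negN _ _ _ _ _ hb hwb hmem hE hurf hvb hv, .negP _ _ _ _ _ hb hwb hmem hE hurf hvb hv]

lemma IsRealization.exists_step_idn (h : IsRealization M V ι l) {χ θ : SCIForm}
    (hb : Node.bot ∉ l) (hmem : Node.lf w (.idn χ θ) ∈ l) (hE : (w, .idn χ θ) ∉ E)
    (hurf : IsUrfather w (.idn χ θ) l) :
    ∃ l' E', ExtendUB l E l' E' ∧ Realizable M V l' := by
  obtain ⟨v, u, ι', hpv, hpu, hvu, hv, hu, hR⟩ := h.exists_fresh_pair χ θ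
  have hvχ : Node.lf v χ ∈ l ++ [Node.lf v χ, Node.lf u θ] := by simp
  have huθ : Node.lf u θ ∈ l ++ [Node.lf v χ, Node.lf u θ] := by simp
  have key : posL w ↔ V χ = V θ := (h.posL_iff hmem).trans (hV.idn_mem_iff hM χ θ)
  by_cases hVeq : V χ = V θ
  · have hw : w.1 = true := key.2 hVeq
    have hpol : posL v ↔ posL u := by rw [hpv, hpu, hVeq]
    refine ⟨_, insert (w, .idn χ θ) E, ?_, ι', by simpa using hR.append_eq hvχ huθ hVeq⟩
    cases hvb : v.1 <;> cases hub : u.1 <;> simp [posL, hvb, hub] at hpol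
    exacts [.idnP2 _ _ _ _ _ _ _ hb hw hmem hE hurf hvb hub hvu hv hu,
      .idnP1 _ _ _ _ _ _ _ hb hw hmem hE hurf hvb hub hvu hv hu]
  · have hw : w.1 = false := by simpa [posL] using mt key.1 hVeq
    by_cases hpol : v.1 = u.1
    · refine ⟨_, insert (w, .idn χ θ) E, ?_, ι',
        by simpa using hR.append_neq hvχ huθ hVeq⟩
      cases hvb : v.1 <;> cases hub : u.1 <;> simp [hvb, hub] at hpol
      exacts [.idnN4 _ _ _ _ _ _ _ hb hw hmem hE hurf hvb hub hvu hv hu,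
        .idnN1 _ _ _ _ _ _ _ hb hw hmem hE hurf hvb hub hvu hv hu]
    · refine ⟨_, insert (w, .idn χ θ) E, ?_, ι', hR⟩
      cases hvb : v.1 <;> cases hub : u.1 <;> simp [hvb, hub] at hpol
      exacts [.idnN3 _ _ _ _ _ _ _ hb hw hmem hE hurf hvb hub hvu hv hu,
        .idnN2 _ _ _ _ _ _ _ hb hw hmem hE hurf hvb hub hvu hv hu]

theorem IsRealization.exists_step (h : IsRealization M V ι l) {l' : List Node}
    {E' : Set (Label × SCIForm)}
    (hstep : ExtendUB l E l' E') : ∃ l'' E'', ExtendUB l E l'' E'' ∧ Realizable M V l'' := by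
  cases hstep with
  | negP _ _ _ hb _ hmem hE hurf | negN _ _ _ hb _ hmem hE hurf =>
    exact h.exists_step_not hM hV hb hmem hE hurf
  | impP1 _ _ _ _ _ hb _ hmem hE hurf | impP2 _ _ _ _ _ hb _ hmem hE hurf
  | impP3 _ _ _ _ _ hb _ hmem hE hurf | impN _ _ _ _ _ hb _ hmem hE hurf =>
    exact h.exists_step_imp hM hV hb hmem hE hurf
  | idnP1 _ _ _ _ _ hb _ hmem hE hurf | idnP2 _ _ _ _ _ hb _ hmem hE hurf
  | idnN1 _ _ _ _ _ hb _ hmem hE hurf | idnN2 _ _ _ _ _ hb _ hmem hE hurf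
  | idnN3 _ _ _ _ _ hb _ hmem hE hurf | idnN4 _ _ _ _ _ hb _ hmem hE hurf =>
    exact h.exists_step_idn hM hV hb hmem hE hurf
  | eqNeg _ _ _ _ _ _ hb h₁ h₂ h₁₂ hu hy hnew =>
    refine ⟨_, _, .eqNeg _ _ _ _ _ _ _ _ hb h₁ h₂ h₁₂ hu hy hnew, ι,
      h.append_eq hu hy ?_⟩
    rw [hV.1, hV.1, h.eq_of_eq h₁ h₂ h₁₂]
  | eqImp _ _ _ _ _ _ _ _ _ _ hb h₁ h₂ h₁₂ h₃ h₄ h₃₄ hx hz hnew =>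
    refine ⟨_, _,
      .eqImp _ _ _ _ _ _ _ _ _ _ _ _ hb h₁ h₂ h₁₂ h₃ h₄ h₃₄ hx hz hnew, ι,
      h.append_eq hx hz ?_⟩
    rw [hV.2.1, hV.2.1, h.eq_of_eq h₁ h₂ h₁₂, h.eq_of_eq h₃ h₄ h₃₄]
  | eqIdn _ _ _ _ _ _ _ _ _ _ hb h₁ h₂ h₁₂ h₃ h₄ h₃₄ hx hz hnew =>
    refine ⟨_, _,
      .eqIdn _ _ _ _ _ _ _ _ _ _ _ _ hb h₁ h₂ h₁₂ h₃ h₄ h₃₄ hx hz hnew, ι,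
      h.append_eq hx hz ?_⟩
    rw [hV.2.2, hV.2.2, h.eq_of_eq h₁ h₂ h₁₂, h.eq_of_eq h₃ h₄ h₃₄]
  | ruleF _ _ _ hb h₁ h₂ hnew =>
    exact ⟨_, _, .ruleF _ _ _ _ _ hb h₁ h₂ hnew, ι, h.append_eq h₁ h₂ rfl⟩
  | ruleSym _ _ hb he hnew =>
    refine ⟨_, _, .ruleSym _ _ _ _ hb he hnew, ι, h.append (h _ he).1.symm ?_⟩
    simpa [Node.relLabels, and_comm] using (h _ he).2
  | ruleTran _ _ _ hb he he' hnew =>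
    refine ⟨_, _, .ruleTran _ _ _ _ _ hb he he' hnew, ι,
      h.append ((h _ he).1.trans (h _ he').1) ?_⟩
    simp only [Node.relLabels, List.mem_cons, List.not_mem_nil, or_false]
    rintro _ (rfl | rfl)
    exacts [(h _ he).2 _ (by simp [Node.relLabels]), (h _ he').2 _ (by simp [Node.relLabels])]
  | bot1 _ _ _ he hne => exact ((h _ hne).1 (h _ he).1).elim
  | bot2 _ _ _ hw hv he =>
    have := (h.posL_iff_of_eq he).1 hw
    simp_all [posL, negL]

end Soundness

theorem exists_open_saturated_run_of_satisfiable {φ : SCIForm} (hφ : SCISatisfiable φ)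
    {w : Label} (hw : posL w) :
    ∃ (n : ℕ) (g : ℕ → List Node) (h : ℕ → Set (Label × SCIForm)),
      g 0 = [Node.lf w φ] ∧ h 0 = ∅ ∧
      (∀ i < n, ExtendUB (g i) (h i) (g (i + 1)) (h (i + 1))) ∧
      Node.bot ∉ g n ∧ (∀ l' E', ¬ ExtendUB (g n) (h n) l' E') := by
  obtain ⟨U, M, V, hM, hV, hD⟩ := hφ
  have hroot : IsRealization M V (fun _ => V φ) [Node.lf w φ] := by
    simpa [IsRealization, Node.Holds, Node.relLabels] using ⟨fun _ => hD, fun _ => hw⟩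
  obtain ⟨n, g, h, hg, hh, hrun, ⟨ι, hR⟩, -, hsat, -⟩ :=
    exists_saturated_run (fun l _ => Realizable M V l)
      (fun _ _ _ _ ⟨_, hR⟩ hstep => hR.exists_step hM hV hstep) _ _ (BranchInv.root φ w)
      ⟨_, hroot⟩
  exact ⟨n, g, h, hg, hh, hrun, hR.bot_notMem, hsat⟩

section Openness

variable {l l' : List Node} {E E' : Set (Label × SCIForm)}

/-- `ClosedTabUB` has one rule for each group of `ExtendUB` rules, branching over all of them. -/
lemma closedTabUB_of_forall_extendUB (h : ExtendUB l E l' E')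
    (hall : ∀ t E'', ExtendUB l E (l ++ t) E'' → Node.bot ∉ t → ClosedTabUB (l ++ t) E'') :
    ClosedTabUB l E := by
  set f := freshLabel l
  have F := freshL_freshLabel l
  have N : ∀ b b', f b 0 ≠ f b' 1 := fun _ _ => freshLabel_ne l zero_ne_one
  cases h with
  | negP w v χ hb hw hmem hE hurf hv hfr =>
    exact .negP _ _ _ _ _ hw hmem hE hurf hv hfr
      (hall _ _ (.negP _ _ _ _ _ hb hw hmem hE hurf hv hfr) (by simp))
  | negN w v χ hb hw hmem hE hurf hv hfr =>
    exact .negN _ _ _ _ _ hw hmem hE hurf hv hfr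
      (hall _ _ (.negN _ _ _ _ _ hb hw hmem hE hurf hv hfr) (by simp))
  | impP1 w _ _ χ θ hb hw hmem hE hurf | impP2 w _ _ χ θ hb hw hmem hE hurf
  | impP3 w _ _ χ θ hb hw hmem hE hurf =>
    exact .impP _ _ w χ θ (f false 0) (f false 1) (f false 0) (f true 1) (f true 0) (f true 1)
      hw hmem hE hurf rfl rfl (N _ _) (F _ _) (F _ _) rfl rfl (N _ _) (F _ _) (F _ _)
      rfl rfl (N _ _) (F _ _) (F _ _)
      (hall _ _ (.impP1 _ _ _ _ _ _ _ hb hw hmem hE hurf rfl rfl (N _ _) (F _ _) (F _ _)) (by simp))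
      (hall _ _ (.impP2 _ _ _ _ _ _ _ hb hw hmem hE hurf rfl rfl (N _ _) (F _ _) (F _ _)) (by simp))
      (hall _ _ (.impP3 _ _ _ _ _ _ _ hb hw hmem hE hurf rfl rfl (N _ _) (F _ _) (F _ _)) (by simp))
  | impN w v u χ θ hb hw hmem hE hurf hv hu hvu hfv hfu =>
    exact .impN _ _ _ _ _ _ _ hw hmem hE hurf hv hu hvu hfv hfu
      (hall _ _ (.impN _ _ _ _ _ _ _ hb hw hmem hE hurf hv hu hvu hfv hfu) (by simp))
  | idnP1 w _ _ χ θ hb hw hmem hE hurf | idnP2 w _ _ χ θ hb hw hmem hE hurf =>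
    exact .idnP _ _ w χ θ (f true 0) (f true 1) (f false 0) (f false 1) hw hmem hE hurf
      rfl rfl (N _ _) (F _ _) (F _ _) rfl rfl (N _ _) (F _ _) (F _ _)
      (hall _ _ (.idnP1 _ _ _ _ _ _ _ hb hw hmem hE hurf rfl rfl (N _ _) (F _ _) (F _ _)) (by simp))
      (hall _ _ (.idnP2 _ _ _ _ _ _ _ hb hw hmem hE hurf rfl rfl (N _ _) (F _ _) (F _ _)) (by simp))
  | idnN1 w _ _ χ θ hb hw hmem hE hurf | idnN2 w _ _ χ θ hb hw hmem hE hurf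
  | idnN3 w _ _ χ θ hb hw hmem hE hurf | idnN4 w _ _ χ θ hb hw hmem hE hurf =>
    exact .idnN _ _ w χ θ (f true 0) (f true 1) (f true 0) (f false 1) (f false 0) (f true 1)
      (f false 0) (f false 1) hw hmem hE hurf
      rfl rfl (N _ _) (F _ _) (F _ _) rfl rfl (N _ _) (F _ _) (F _ _)
      rfl rfl (N _ _) (F _ _) (F _ _) rfl rfl (N _ _) (F _ _) (F _ _)
      (hall _ _ (.idnN1 _ _ _ _ _ _ _ hb hw hmem hE hurf rfl rfl (N _ _) (F _ _) (F _ _)) (by simp))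
      (hall _ _ (.idnN2 _ _ _ _ _ _ _ hb hw hmem hE hurf rfl rfl (N _ _) (F _ _) (F _ _)) (by simp))
      (hall _ _ (.idnN3 _ _ _ _ _ _ _ hb hw hmem hE hurf rfl rfl (N _ _) (F _ _) (F _ _)) (by simp))
      (hall _ _ (.idnN4 _ _ _ _ _ _ _ hb hw hmem hE hurf rfl rfl (N _ _) (F _ _) (F _ _)) (by simp))
  | eqNeg _ _ _ _ _ _ hb h₁ h₂ h₃ h₄ h₅ hnew =>
    exact .eqNeg _ _ _ _ _ _ _ _ h₁ h₂ h₃ h₄ h₅ hnew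
      (hall _ _ (.eqNeg _ _ _ _ _ _ _ _ hb h₁ h₂ h₃ h₄ h₅ hnew) (by simp))
  | eqImp _ _ _ _ _ _ _ _ _ _ hb h₁ h₂ h₃ h₄ h₅ h₆ h₇ h₈ hnew =>
    exact .eqImp _ _ _ _ _ _ _ _ _ _ _ _ h₁ h₂ h₃ h₄ h₅ h₆ h₇ h₈ hnew
      (hall _ _ (.eqImp _ _ _ _ _ _ _ _ _ _ _ _ hb h₁ h₂ h₃ h₄ h₅ h₆ h₇ h₈ hnew)
        (by simp))
  | eqIdn _ _ _ _ _ _ _ _ _ _ hb h₁ h₂ h₃ h₄ h₅ h₆ h₇ h₈ hnew =>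
    exact .eqIdn _ _ _ _ _ _ _ _ _ _ _ _ h₁ h₂ h₃ h₄ h₅ h₆ h₇ h₈ hnew
      (hall _ _ (.eqIdn _ _ _ _ _ _ _ _ _ _ _ _ hb h₁ h₂ h₃ h₄ h₅ h₆ h₇ h₈ hnew)
        (by simp))
  | ruleF _ _ _ hb h₁ h₂ hnew =>
    exact .ruleF _ _ _ _ _ h₁ h₂ hnew (hall _ _ (.ruleF _ _ _ _ _ hb h₁ h₂ hnew) (by simp))
  | ruleSym _ _ hb h₁ hnew =>
    exact .ruleSym _ _ _ _ h₁ hnew (hall _ _ (.ruleSym _ _ _ _ hb h₁ hnew) (by simp))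
  | ruleTran _ _ _ hb h₁ h₂ hnew =>
    exact .ruleTran _ _ _ _ _ h₁ h₂ hnew
      (hall _ _ (.ruleTran _ _ _ _ _ hb h₁ h₂ hnew) (by simp))
  | bot1 _ _ _ h₁ h₂ => exact .clos1 _ _ _ _ h₁ h₂
  | bot2 _ _ _ hw hv h₁ => exact .clos2 _ _ _ _ hw hv h₁

lemma exists_open_step (hopen : ¬ ClosedTabUB l E) (hbot : Node.bot ∉ l)
    (h : ExtendUB l E l' E') :
    ∃ l'' E'', ExtendUB l E l'' E'' ∧ ¬ ClosedTabUB l'' E'' ∧ Node.bot ∉ l'' := by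
  by_contra! hcon
  refine hopen (closedTabUB_of_forall_extendUB h fun t E'' hs ht => ?_)
  by_contra hc
  simpa [hbot, ht] using hcon _ _ hs hc

end Openness

structure OpenSaturated (S : List Node) (E : Set (Label × SCIForm)) : Prop where
  bot_notMem : Node.bot ∉ S
  saturated : ∀ l' E', ¬ ExtendUB S E l' E'

namespace OpenSaturated

variable {φ : SCIForm} {S : List Node} {E : Set (Label × SCIForm)} (hS : OpenSaturated S E)
include hS

lemma eq_of_lf {w v : Label} {ψ : SCIForm} (hw : Node.lf w ψ ∈ S) (hv : Node.lf v ψ ∈ S) :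
    Node.eq w v ∈ S :=
  by_contra fun hnew => hS.saturated _ _ (.ruleF S E w v ψ hS.bot_notMem hw hv hnew)

lemma eq_symm {w v : Label} (h : Node.eq w v ∈ S) : Node.eq v w ∈ S :=
  by_contra fun hnew => hS.saturated _ _ (.ruleSym S E w v hS.bot_notMem h hnew)

lemma eq_trans {w v u : Label} (h : Node.eq w v ∈ S) (h' : Node.eq v u ∈ S) :
    Node.eq w u ∈ S :=
  by_contra fun hnew => hS.saturated _ _ (.ruleTran S E w v u hS.bot_notMem h h' hnew)

lemma eq_not {w v u y : Label} {χ θ : SCIForm} (hw : Node.lf w χ ∈ S) (hv : Node.lf v θ ∈ S)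
    (he : Node.eq w v ∈ S) (hu : Node.lf u (.not χ) ∈ S) (hy : Node.lf y (.not θ) ∈ S) :
    Node.eq u y ∈ S :=
  by_contra fun hnew =>
    hS.saturated _ _ (.eqNeg S E w v u y χ θ hS.bot_notMem hw hv he hu hy hnew)

lemma eq_binary {op : SCIForm → SCIForm → SCIForm} (hop : op = .imp ∨ op = .idn)
    {w v w' v' x z : Label} {χ θ χ' θ' : SCIForm}
    (hw : Node.lf w χ ∈ S) (hv : Node.lf v θ ∈ S) (he : Node.eq w v ∈ S)
    (hw' : Node.lf w' χ' ∈ S) (hv' : Node.lf v' θ' ∈ S) (he' : Node.eq w' v' ∈ S)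
    (hx : Node.lf x (op χ χ') ∈ S) (hz : Node.lf z (op θ θ') ∈ S) : Node.eq x z ∈ S := by
  by_contra hnew
  rcases hop with rfl | rfl
  · exact hS.saturated _ _
      (.eqImp S E w v w' v' x z χ θ χ' θ' hS.bot_notMem hw hv he hw' hv' he' hx hz hnew)
  · exact hS.saturated _ _
      (.eqIdn S E w v w' v' x z χ θ χ' θ' hS.bot_notMem hw hv he hw' hv' he' hx hz hnew)

lemma fst_eq_of_eq {w v : Label} (h : Node.eq w v ∈ S) : w.1 = v.1 := by
  have pos_neg : ∀ {a b : Label}, Node.eq a b ∈ S → a.1 = true → b.1 = false → False :=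
    fun he ha hb => hS.saturated _ _ (.bot2 S E _ _ hS.bot_notMem ha hb he)
  cases hw : w.1 <;> cases hv : v.1
  exacts [rfl, (pos_neg (hS.eq_symm h) hv hw).elim, (pos_neg h hw hv).elim, rfl]

lemma neq_notMem_of_eq {w v : Label} (h : Node.eq w v ∈ S) : Node.neq w v ∉ S :=
  fun hne => hS.saturated _ _ (.bot1 S E w v hS.bot_notMem h hne)

/-- Only the urfather `u₀` of `ψ` is decomposed; `u` inherits its conclusion because (F) and
(⊥₂) give `u` the polarity of `u₀`. -/
lemma decomposed (hI : BranchInv φ S E) {u : Label} {ψ : SCIForm} (h : Node.lf u ψ ∈ S) :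
    Decomposed u ψ S := by
  obtain ⟨u₀, hurf⟩ := exists_isUrfather h
  refine Decomposed.of_fst_eq ?_ (hS.fst_eq_of_eq (hS.eq_of_lf hurf.mem h))
  by_cases hE : (u₀, ψ) ∈ E
  · exact hI.decomposed _ _ hE
  set v := freshLabel S
  have F := freshL_freshLabel S
  have N : ∀ b b', v b 0 ≠ v b' 1 := fun _ _ => freshLabel_ne S zero_ne_one
  have hb := hS.bot_notMem
  have hmem := hurf.mem
  cases ψ with
  | atom => trivial
  | not χ =>
    cases hu : u₀.1
    · exact (hS.saturated _ _ (.negN _ _ _ (v true 0) _ hb hu hmem hE hurf rfl (F _ _))).elim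
    · exact (hS.saturated _ _ (.negP _ _ _ (v false 0) _ hb hu hmem hE hurf rfl (F _ _))).elim
  | imp χ θ =>
    cases hu : u₀.1
    · exact (hS.saturated _ _ (.impN _ _ _ (v true 0) (v false 1) _ _ hb hu hmem hE hurf
        rfl rfl (N _ _) (F _ _) (F _ _))).elim
    · exact (hS.saturated _ _ (.impP1 _ _ _ (v false 0) (v false 1) _ _ hb hu hmem hE hurf
        rfl rfl (N _ _) (F _ _) (F _ _))).elim
  | idn χ θ =>
    cases hu : u₀.1
    · exact (hS.saturated _ _ (.idnN2 _ _ _ (v true 0) (v false 1) _ _ hb hu hmem hE hurf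
        rfl rfl (N _ _) (F _ _) (F _ _))).elim
    · exact (hS.saturated _ _ (.idnP1 _ _ _ (v true 0) (v true 1) _ _ hb hu hmem hE hurf
        rfl rfl (N _ _) (F _ _) (F _ _))).elim

end OpenSaturated

abbrev LabelOn (S : List Node) : Type := {w : Label // ∃ ψ, Node.lf w ψ ∈ S}

/-- Taking `EqvGen` makes the quotient definable on every branch; on an open saturated branch it
is the branch equality itself (`OpenSaturated.mk_eq_mk_iff`). -/
instance labelSetoid (S : List Node) : Setoid (LabelOn S) :=
  ⟨Relation.EqvGen fun a b => Node.eq a.1 b.1 ∈ S, Relation.EqvGen.is_equivalence _⟩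

/-- Classes of labels, plus the two truth values for the formulas that no label on the branch
names. -/
abbrev Carrier (S : List Node) : Type := Quotient (labelSetoid S) ⊕ Bool

def designated (S : List Node) : Set (Carrier S) :=
  {x | match x with
    | .inl q => ∃ a : LabelOn S, ⟦a⟧ = q ∧ a.1.1 = true
    | .inr b => b = true}

structure NegWitness (S : List Node) (x : Carrier S) : Type where
  arg : LabelOn S
  res : LabelOn S
  χ : SCIForm
  hx : x = .inl ⟦arg⟧
  harg : Node.lf arg.1 χ ∈ S
  hres : Node.lf res.1 (.not χ) ∈ S

structure BinWitness (S : List Node) (op : SCIForm → SCIForm → SCIForm) (x y : Carrier S) :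
    Type where
  left : LabelOn S
  right : LabelOn S
  res : LabelOn S
  χ : SCIForm
  θ : SCIForm
  hx : x = .inl ⟦left⟧
  hy : y = .inl ⟦right⟧
  hleft : Node.lf left.1 χ ∈ S
  hright : Node.lf right.1 θ ∈ S
  hres : Node.lf res.1 (op χ θ) ∈ S

open Classical in
/-- On classes named by the branch the operations follow the labelled formulas; everywhere else
they return the truth value that the SCI conditions demand. -/
noncomputable def negOp (S : List Node) (x : Carrier S) : Carrier S :=
  if h : Nonempty (NegWitness S x) then .inl ⟦(Classical.choice h).res⟧
  else .inr (decide (x ∉ designated S))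

open Classical in
noncomputable def binOp (S : List Node) (op : SCIForm → SCIForm → SCIForm)
    (P : Carrier S → Carrier S → Prop) (x y : Carrier S) : Carrier S :=
  if h : Nonempty (BinWitness S op x y) then .inl ⟦(Classical.choice h).res⟧
  else .inr (decide (P x y))

noncomputable def canonicalStruct (S : List Node) : SCIStruct (Carrier S) where
  D := designated S
  neg := negOp S
  imp := binOp S .imp fun x y => x ∉ designated S ∨ y ∈ designated S
  idn := binOp S .idn (· = ·)

open Classical in
noncomputable def canonicalVal (S : List Node) : SCIForm → Carrier S
  | .atom n =>
    if h : ∃ a : LabelOn S, Node.lf a.1 (.atom n) ∈ S then .inl ⟦h.choose⟧ else .inr true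
  | .not ψ => (canonicalStruct S).neg (canonicalVal S ψ)
  | .imp ψ χ => (canonicalStruct S).imp (canonicalVal S ψ) (canonicalVal S χ)
  | .idn ψ χ => (canonicalStruct S).idn (canonicalVal S ψ) (canonicalVal S χ)

lemma canonicalVal_isValuation (S : List Node) : IsValuation (canonicalStruct S) (canonicalVal S) :=
  ⟨fun _ => rfl, fun _ _ => rfl, fun _ _ => rfl⟩

lemma inr_mem_designated_iff {S : List Node} {b : Bool} : .inr b ∈ designated S ↔ b = true :=
  Iff.rfl

lemma negOp_mem_designated_iff {S : List Node}
    (hwit : ∀ x (W : NegWitness S x), .inl ⟦W.res⟧ ∈ designated S ↔ x ∉ designated S)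
    (x : Carrier S) : negOp S x ∈ designated S ↔ x ∉ designated S := by
  unfold negOp
  split_ifs with h
  · exact hwit x _
  · simp [inr_mem_designated_iff]

lemma binOp_mem_designated_iff {S : List Node} {op : SCIForm → SCIForm → SCIForm}
    {P : Carrier S → Carrier S → Prop}
    (hwit : ∀ x y (W : BinWitness S op x y), .inl ⟦W.res⟧ ∈ designated S ↔ P x y)
    (x y : Carrier S) : binOp S op P x y ∈ designated S ↔ P x y := by
  unfold binOp
  split_ifs with h
  · exact hwit x y _
  · simp [inr_mem_designated_iff]

namespace OpenSaturated

variable {φ : SCIForm} {S : List Node} {E : Set (Label × SCIForm)} (hS : OpenSaturated S E)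
include hS

lemma mk_eq_mk_iff (a b : LabelOn S) : (⟦a⟧ : Quotient (labelSetoid S)) = ⟦b⟧ ↔
    Node.eq a.1 b.1 ∈ S := by
  refine ⟨fun h => ?_, fun h => Quotient.sound (.rel a b h)⟩
  have hrel : Relation.EqvGen _ a b := Quotient.exact h
  clear h
  induction hrel with
  | rel _ _ h => exact h
  | refl a => exact hS.eq_of_lf a.2.choose_spec a.2.choose_spec
  | symm _ _ _ ih => exact hS.eq_symm ih
  | trans _ _ _ _ _ ih ih' => exact hS.eq_trans ih ih'

lemma inl_mem_designated_iff (a : LabelOn S) : .inl ⟦a⟧ ∈ designated S ↔ a.1.1 = true := by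
  refine ⟨fun ⟨b, hb, hpos⟩ => ?_, fun h => ⟨a, rfl, h⟩⟩
  rwa [← hS.fst_eq_of_eq ((hS.mk_eq_mk_iff b a).1 hb)]

lemma eq_of_inl_mk_eq {a b : LabelOn S} (h : (.inl ⟦a⟧ : Carrier S) = .inl ⟦b⟧) :
    Node.eq a.1 b.1 ∈ S :=
  (hS.mk_eq_mk_iff a b).1 (Sum.inl.inj h)

lemma negOp_mem_designated_iff (hI : BranchInv φ S E) (x : Carrier S) :
    negOp S x ∈ designated S ↔ x ∉ designated S := by
  refine _root_.negOp_mem_designated_iff (fun x W => ?_) x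
  obtain ⟨arg, res, χ, rfl, harg, hres⟩ := W
  obtain ⟨v, hv, hpol⟩ := hS.decomposed hI hres
  have := hS.fst_eq_of_eq (hS.eq_of_lf harg hv)
  rw [hS.inl_mem_designated_iff, hS.inl_mem_designated_iff, this, hpol]
  cases res.1.1 <;> simp

lemma impOp_mem_designated_iff (hI : BranchInv φ S E) (x y : Carrier S) :
    (canonicalStruct S).imp x y ∈ designated S ↔ x ∉ designated S ∨ y ∈ designated S := by
  refine binOp_mem_designated_iff (P := fun x y => x ∉ designated S ∨ y ∈ designated S)
    (fun x y W => ?_) x y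
  obtain ⟨left, right, res, χ, θ, rfl, rfl, hleft, hright, hres⟩ := W
  obtain ⟨v, z, hv, hz, hpol⟩ := hS.decomposed hI hres
  have hl := hS.fst_eq_of_eq (hS.eq_of_lf hleft hv)
  have hr := hS.fst_eq_of_eq (hS.eq_of_lf hright hz)
  simp only [hS.inl_mem_designated_iff, hl, hr, hpol]
  cases v.1 <;> cases z.1 <;> simp

lemma idnOp_mem_designated_iff (hI : BranchInv φ S E) (x y : Carrier S) :
    (canonicalStruct S).idn x y ∈ designated S ↔ x = y := by
  refine binOp_mem_designated_iff (P := (· = ·)) (fun x y W => ?_) x y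
  obtain ⟨left, right, res, χ, θ, rfl, rfl, hleft, hright, hres⟩ := W
  obtain ⟨v, z, hv, hz, hpol⟩ := hS.decomposed hI hres
  have hl := hS.eq_of_lf hleft hv
  have hr := hS.eq_of_lf hright hz
  rw [hS.inl_mem_designated_iff, Sum.inl.injEq, hS.mk_eq_mk_iff]
  have hiff : Node.eq left.1 right.1 ∈ S ↔ Node.eq v z ∈ S :=
    ⟨fun h => hS.eq_trans (hS.eq_trans (hS.eq_symm hl) h) hr,
      fun h => hS.eq_trans (hS.eq_trans hl h) (hS.eq_symm hr)⟩
  rw [hiff]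
  split_ifs at hpol with hres
  · exact iff_of_true hres hpol
  · refine iff_of_false hres fun h => ?_
    rcases hpol with hne | hpol
    exacts [hS.neq_notMem_of_eq h hne, hpol (hS.fst_eq_of_eq h)]

lemma isSCIModel (hI : BranchInv φ S E) : IsSCIModel (canonicalStruct S) := by
  refine ⟨⟨.inr true⟩, fun h => ?_, hS.negOp_mem_designated_iff hI,
    hS.impOp_mem_designated_iff hI, hS.idnOp_mem_designated_iff hI⟩
  have : (Sum.inr false : Carrier S) ∈ (canonicalStruct S).D := h ▸ Set.mem_univ _
  exact Bool.false_ne_true (inr_mem_designated_iff.1 this)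

lemma negOp_inl_mk {a v : Label} {χ : SCIForm} (ha : Node.lf a (.not χ) ∈ S)
    (hv : Node.lf v χ ∈ S) :
    negOp S (.inl ⟦⟨v, χ, hv⟩⟧) = .inl ⟦⟨a, _, ha⟩⟧ := by
  have hW : Nonempty (NegWitness S (.inl ⟦⟨v, χ, hv⟩⟧)) :=
    ⟨⟨⟨v, χ, hv⟩, ⟨a, _, ha⟩, χ, rfl, hv, ha⟩⟩
  rw [negOp, dif_pos hW]
  generalize Classical.choice hW = W
  congr 1
  exact (hS.mk_eq_mk_iff _ _).2
    (hS.eq_not W.harg hv (hS.eq_of_inl_mk_eq W.hx.symm) W.hres ha)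

lemma binOp_inl_mk {op : SCIForm → SCIForm → SCIForm} (hop : op = .imp ∨ op = .idn)
    (P : Carrier S → Carrier S → Prop) {a v z : Label} {χ θ : SCIForm}
    (ha : Node.lf a (op χ θ) ∈ S) (hv : Node.lf v χ ∈ S) (hz : Node.lf z θ ∈ S) :
    binOp S op P (.inl ⟦⟨v, χ, hv⟩⟧) (.inl ⟦⟨z, θ, hz⟩⟧) =
      .inl ⟦⟨a, _, ha⟩⟧ := by
  have hW : Nonempty (BinWitness S op (.inl ⟦⟨v, χ, hv⟩⟧) (.inl ⟦⟨z, θ, hz⟩⟧)) :=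
    ⟨⟨⟨v, χ, hv⟩, ⟨z, θ, hz⟩, ⟨a, _, ha⟩, χ, θ, rfl, rfl, hv, hz, ha⟩⟩
  rw [binOp, dif_pos hW]
  generalize Classical.choice hW = W
  congr 1
  exact (hS.mk_eq_mk_iff _ _).2 (hS.eq_binary hop W.hleft hv (hS.eq_of_inl_mk_eq W.hx.symm)
    W.hright hz (hS.eq_of_inl_mk_eq W.hy.symm) W.hres ha)

lemma canonicalVal_eq (hI : BranchInv φ S E) {ψ : SCIForm} :
    ∀ {a : Label} (h : Node.lf a ψ ∈ S), canonicalVal S ψ = .inl ⟦⟨a, ψ, h⟩⟧ := by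
  induction ψ with
  | atom n =>
    intro a h
    have hex : ∃ b : LabelOn S, Node.lf b.1 (.atom n) ∈ S := ⟨⟨a, _, h⟩, h⟩
    rw [canonicalVal, dif_pos hex]
    exact congrArg Sum.inl ((hS.mk_eq_mk_iff _ _).2 (hS.eq_of_lf hex.choose_spec h))
  | not χ ih =>
    intro a h
    obtain ⟨v, hv, -⟩ := hS.decomposed hI h
    rw [canonicalVal, ih hv]
    exact hS.negOp_inl_mk h hv
  | imp χ θ ih ih' =>
    intro a h
    obtain ⟨v, z, hv, hz, -⟩ := hS.decomposed hI h
    rw [canonicalVal, ih hv, ih' hz]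
    exact hS.binOp_inl_mk (.inl rfl) (fun x y => x ∉ designated S ∨ y ∈ designated S) h hv hz
  | idn χ θ ih ih' =>
    intro a h
    obtain ⟨v, z, hv, hz, -⟩ := hS.decomposed hI h
    rw [canonicalVal, ih hv, ih' hz]
    exact hS.binOp_inl_mk (.inr rfl) (· = ·) h hv hz

end OpenSaturated

theorem closedTabUB_of_valid {φ : SCIForm} (hφ : SCIValid φ) {w : Label} (hw : negL w) :
    ClosedTabUB [Node.lf w φ] ∅ := by
  by_contra hopen
  obtain ⟨_, g, h, -, -, -, ⟨-, hbot⟩, hI, hsat, hpre⟩ :=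
    exists_saturated_run (fun l E => ¬ ClosedTabUB l E ∧ Node.bot ∉ l)
      (fun _ _ _ _ ⟨hopen, hbot⟩ hstep => exists_open_step hopen hbot hstep) _ _
      (BranchInv.root φ w) ⟨hopen, by simp⟩
  have hS : OpenSaturated _ _ := ⟨hbot, hsat⟩
  have hD := hφ _ _ _ (hS.isSCIModel hI) (canonicalVal_isValuation _)
  have hmem : Node.lf w φ ∈ g _ := hpre.subset (by simp)
  rw [hS.canonicalVal_eq hI hmem] at hD
  exact Bool.false_ne_true (hw ▸ (hS.inl_mem_designated_iff _).1 hD)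

/-- TC_SCI+(UB) is sound, complete, and terminating:
(i) if φ is SCI-satisfiable then there is an open, fully expanded
TC_SCI+(UB)-tableau with w⁺ : φ at the root (a branch developed from the root
by TC_SCI+(UB) rule applications on which ⊥ does not occur and to which no rule
is applicable);
(ii) if φ is SCI-valid then φ has a TC_SCI+(UB)-tableau proof;
(iii) on any branch of a TC_SCI+(UB)-tableau for φ, rules are applied at most
|φ| + |φ|² + 1 times. -/
theorem stmt_17 :
    (∀ φ : SCIForm, SCISatisfiable φ → ∀ w : Label, posL w →
      ∃ (n : ℕ) (g : ℕ → List Node) (h : ℕ → Set (Label × SCIForm)),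
        g 0 = [Node.lf w φ] ∧ h 0 = ∅ ∧
        (∀ i < n, ExtendUB (g i) (h i) (g (i + 1)) (h (i + 1))) ∧
        Node.bot ∉ g n ∧ (∀ l' E', ¬ ExtendUB (g n) (h n) l' E')) ∧
    (∀ φ : SCIForm, SCIValid φ → ∀ w : Label, negL w →
      ClosedTabUB [Node.lf w φ] ∅) ∧
    (∀ (φ : SCIForm) (w : Label) (n : ℕ)
        (g : ℕ → List Node) (h : ℕ → Set (Label × SCIForm)),
        g 0 = [Node.lf w φ] → h 0 = ∅ →
        (∀ i < n, ExtendUB (g i) (h i) (g (i + 1)) (h (i + 1))) →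
        n ≤ SCIForm.size φ + SCIForm.size φ ^ 2 + 1) :=
  ⟨fun _ hφ _ hw => exists_open_saturated_run_of_satisfiable hφ hw,
    fun _ hφ _ hw => closedTabUB_of_valid hφ hw,
    fun _ _ _ _ _ hg hh hrun => run_length_le hg hh hrun⟩
end
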